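/- arXiv:math/0703898 — 6 statements merged into one kernel-verified Lean document; each statement's English description precedes it below -/
import Mathlib

section
/- Let τ be the canonical sequence of a partition and let σ = 1(τ+1), i.e., the symbol 1 followed by τ with every entry increased by 1. Then for every n ≥ 1, p(n;σ) = Σ_{i=0}^{n−1} C(n−1,i) · p(i;τ), where C(n−1,i) is the binomial coefficient. -/
/-- `π` is the canonical sequence of a set partition: every entry is at least 1,
and each entry is at most one more than the maximum of the preceding entries
(so the first entry is 1). -/
def IsCanonicalSeq (π : List ℕ) : Prop :=
  ∀ i (h : i < π.length), 1 ≤ π.get ⟨i, h⟩ ∧ π.get ⟨i, h⟩ ≤ (π.take i).foldr max 0 + 1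

/-- `π` contains the pattern `σ`: there is a subsequence of `π`
order-isomorphic to `σ`. -/
def ContainsPat (π σ : List ℕ) : Prop :=
  ∃ f : Fin σ.length → Fin π.length, StrictMono f ∧
    ∀ i j : Fin σ.length, σ.get i < σ.get j ↔ π.get (f i) < π.get (f j)

/-- `π` avoids the pattern `σ`. -/
def AvoidsPat (π σ : List ℕ) : Prop := ¬ ContainsPat π σ

/-- `pAvoid n σ` is the number of canonical sequences of partitions of `[n]`
avoiding the pattern `σ`. -/
noncomputable def pAvoid (n : ℕ) (σ : List ℕ) : ℕ :=
  Set.ncard {π : List ℕ | π.length = n ∧ IsCanonicalSeq π ∧ AvoidsPat π σ}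

/-- Two patterns are equivalent if they have the same number of avoiders of
each size. -/
def PatEquiv (σ σ' : List ℕ) : Prop := ∀ n, pAvoid n σ = pAvoid n σ'

/-- The increasing sequence `1, 2, …, k`. -/
def iota (k : ℕ) : List ℕ := (List.range k).map (· + 1)

/-!
A canonical sequence of positive length has the form `1 :: x`. Deleting the first block (the
entries equal to `1`) and lowering the other entries by one turns `x` into a sequence `ρ`, and
`1 :: x` is canonical iff the entries of `x` are positive and `ρ` is canonical. In an occurrence of
`1(τ+1)` every entry after the first exceeds the first one, hence exceeds `1`; so `1 :: x` contains
`1(τ+1)` iff `ρ` contains `τ`. Conversely `x` is determined by `ρ` and the positions of its ones;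
if `x` has length `m` and `ρ` has length `i`, the ones may occupy any `m - i` of the `m` places.
-/

/-- `IsCanonicalAfter M l`: `l` can follow a prefix of a canonical sequence whose maximum is `M`. -/
def IsCanonicalAfter : ℕ → List ℕ → Prop
  | _, [] => True
  | M, a :: l => 0 < a ∧ a ≤ M + 1 ∧ IsCanonicalAfter (max M a) l

def dropFirstBlock (π : List ℕ) : List ℕ := (π.filter (1 < ·)).map (· - 1)

theorem foldr_max_max_left (l : List ℕ) (a M : ℕ) :
    l.foldr max (max M a) = max a (l.foldr max M) := by
  induction l with
  | nil => exact max_comm M a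
  | cons b l ih => simp only [List.foldr_cons, ih, max_left_comm]

theorem isCanonicalAfter_iff (M : ℕ) (l : List ℕ) :
    IsCanonicalAfter M l ↔
      ∀ i (h : i < l.length), 0 < l[i] ∧ l[i] ≤ (l.take i).foldr max M + 1 := by
  induction l generalizing M with
  | nil => simp [IsCanonicalAfter]
  | cons a l ih =>
    simp only [IsCanonicalAfter, ih, foldr_max_max_left, List.length_cons]
    constructor
    · rintro ⟨ha, haM, hl⟩ (_ | i) hi
      · exact ⟨ha, haM⟩
      · simpa using hl i (by omega)
    · intro h
      exact ⟨(h 0 (by simp)).1, (h 0 (by simp)).2, fun i hi => h (i + 1) (by omega)⟩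

theorem isCanonicalSeq_iff_isCanonicalAfter_zero (π : List ℕ) :
    IsCanonicalSeq π ↔ IsCanonicalAfter 0 π := by
  rw [isCanonicalAfter_iff]; rfl

theorem IsCanonicalAfter.le_add_length {M : ℕ} {l : List ℕ} (h : IsCanonicalAfter M l) :
    ∀ a ∈ l, a ≤ M + l.length := by
  induction l generalizing M with
  | nil => simp
  | cons b l ih =>
    obtain ⟨-, hbM, hl⟩ := h
    rintro a (_ | ⟨_, ha⟩)
    · rw [List.length_cons]; omega
    · have := ih hl a ha
      rw [List.length_cons]; omega

theorem IsCanonicalAfter.pos {M : ℕ} {l : List ℕ} (h : IsCanonicalAfter M l) :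
    ∀ a ∈ l, 0 < a := by
  induction l generalizing M with
  | nil => simp
  | cons b l ih =>
    obtain ⟨hb, -, hl⟩ := h
    rintro a (_ | ⟨_, ha⟩)
    · exact hb
    · exact ih hl a ha

@[simp] theorem dropFirstBlock_nil : dropFirstBlock [] = [] := rfl

@[simp] theorem dropFirstBlock_cons_one (π : List ℕ) :
    dropFirstBlock (1 :: π) = dropFirstBlock π := by
  simp [dropFirstBlock]

@[simp] theorem dropFirstBlock_cons_add_two (a : ℕ) (π : List ℕ) :
    dropFirstBlock ((a + 2) :: π) = (a + 1) :: dropFirstBlock π := by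
  simp [dropFirstBlock]

theorem dropFirstBlock_pos (π : List ℕ) : ∀ r ∈ dropFirstBlock π, 0 < r := by
  simp only [dropFirstBlock, List.mem_map, List.mem_filter]
  rintro _ ⟨a, ⟨-, ha⟩, rfl⟩
  exact Nat.sub_pos_of_lt (of_decide_eq_true ha)

theorem length_dropFirstBlock_le (π : List ℕ) : (dropFirstBlock π).length ≤ π.length := by
  simpa [dropFirstBlock] using List.length_filter_le _ π

theorem map_add_one_dropFirstBlock (π : List ℕ) :
    (dropFirstBlock π).map (· + 1) = π.filter (1 < ·) := by
  rw [dropFirstBlock, List.map_map]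
  refine (List.map_congr_left fun a ha => ?_).trans (List.map_id _)
  exact Nat.sub_add_cancel (of_decide_eq_true (List.mem_filter.1 ha).2).le

theorem isCanonicalAfter_succ_iff (M : ℕ) (π : List ℕ) :
    IsCanonicalAfter (M + 1) π ↔ (∀ a ∈ π, 0 < a) ∧ IsCanonicalAfter M (dropFirstBlock π) := by
  induction π generalizing M with
  | nil => simp [IsCanonicalAfter]
  | cons a π ih =>
    match a with
    | 0 => simp [IsCanonicalAfter]
    | 1 =>
      simp only [IsCanonicalAfter, dropFirstBlock_cons_one, List.forall_mem_cons,
        show max (M + 1) 1 = M + 1 by omega, ih]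
      grind
    | a + 2 =>
      simp only [IsCanonicalAfter, dropFirstBlock_cons_add_two, List.forall_mem_cons,
        show max (M + 1) (a + 2) = max M (a + 1) + 1 by omega, ih]
      grind

theorem isCanonicalSeq_cons_iff (a : ℕ) (π : List ℕ) :
    IsCanonicalSeq (a :: π) ↔
      a = 1 ∧ (∀ b ∈ π, 0 < b) ∧ IsCanonicalSeq (dropFirstBlock π) := by
  simp only [isCanonicalSeq_iff_isCanonicalAfter_zero, IsCanonicalAfter]
  constructor
  · rintro ⟨ha, ha1, hπ⟩
    obtain rfl : a = 1 := by omega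
    exact ⟨rfl, (isCanonicalAfter_succ_iff 0 π).1 hπ⟩
  · rintro ⟨rfl, hπ⟩
    exact ⟨one_pos, le_rfl, (isCanonicalAfter_succ_iff 0 π).2 hπ⟩

theorem finite_setOf_length_eq_isCanonicalSeq (n : ℕ) :
    {π : List ℕ | π.length = n ∧ IsCanonicalSeq π}.Finite := by
  refine ((List.finite_length_eq (Fin (n + 1)) n).image (List.map Fin.val)).subset ?_
  rintro π ⟨hn, hπ⟩
  have hle := ((isCanonicalSeq_iff_isCanonicalAfter_zero π).1 hπ).le_add_length
  refine ⟨π.pmap (fun a ha => (⟨a, Nat.lt_succ_of_le ha⟩ : Fin (n + 1)))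
    (by simpa [hn] using hle), ?_, ?_⟩
  · simpa using hn
  · simp [List.map_pmap]

section OrderIsomorphic

variable {α β : Type*} [LinearOrder α] [LinearOrder β]

def IsOrderIsomorphic (s : List α) (t : List β) : Prop :=
  s.length = t.length ∧ ∀ p ∈ s.zip t, ∀ q ∈ s.zip t, p.1 < q.1 ↔ p.2 < q.2

theorem isOrderIsomorphic_iff_getElem {s : List α} {t : List β} :
    IsOrderIsomorphic s t ↔ ∃ h : s.length = t.length,
      ∀ i j (hi : i < s.length) (hj : j < s.length), s[i] < s[j] ↔ t[i] < t[j] := by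
  refine ⟨fun ⟨h, hst⟩ => ⟨h, fun i j hi hj => ?_⟩, fun ⟨h, hst⟩ => ⟨h, fun p hp q hq => ?_⟩⟩
  · have hmem : ∀ k (hk : k < s.length), (s[k], t[k]) ∈ s.zip t := fun k hk =>
      List.mem_iff_getElem.2 ⟨k, by simpa [h] using hk, List.getElem_zip⟩
    exact hst _ (hmem i hi) _ (hmem j hj)
  · obtain ⟨i, hi, rfl⟩ := List.mem_iff_getElem.1 hp
    obtain ⟨j, hj, rfl⟩ := List.mem_iff_getElem.1 hq
    simpa using hst i j (by simp at hi; omega) (by simp at hj; omega)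

theorem isOrderIsomorphic_map_iff {γ δ : Type*} [LinearOrder γ] [LinearOrder δ] {f : α → γ}
    {g : β → δ} (hf : StrictMono f) (hg : StrictMono g) (s : List α) (t : List β) :
    IsOrderIsomorphic (s.map f) (t.map g) ↔ IsOrderIsomorphic s t := by
  simp only [IsOrderIsomorphic, List.length_map, List.zip_map, List.forall_mem_map, Prod.map,
    hf.lt_iff_lt, hg.lt_iff_lt]

theorem IsOrderIsomorphic.of_cons {a : α} {b : β} {s : List α} {t : List β}
    (h : IsOrderIsomorphic (a :: s) (b :: t)) : IsOrderIsomorphic s t :=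
  ⟨by simpa using h.1, fun p hp q hq => h.2 p (by simp [hp]) q (by simp [hq])⟩

theorem IsOrderIsomorphic.lt_of_cons {a : α} {b : β} {s : List α} {t : List β}
    (h : IsOrderIsomorphic (a :: s) (b :: t)) (hb : ∀ d ∈ t, b < d) : ∀ c ∈ s, a < c := by
  intro c hc
  obtain ⟨i, hi, rfl⟩ := List.mem_iff_getElem.1 hc
  obtain ⟨hlen, hiso⟩ := isOrderIsomorphic_iff_getElem.1 h
  exact (hiso 0 (i + 1) (by simp) (by simpa using hi)).2 (hb _ (List.getElem_mem _))

theorem IsOrderIsomorphic.cons {a : α} {b : β} {s : List α} {t : List β}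
    (h : IsOrderIsomorphic s t) (ha : ∀ c ∈ s, a < c) (hb : ∀ d ∈ t, b < d) :
    IsOrderIsomorphic (a :: s) (b :: t) := by
  refine ⟨by simpa using h.1, ?_⟩
  have hab : ∀ p ∈ s.zip t, a < p.1 ∧ b < p.2 := fun p hp =>
    ⟨ha _ (List.of_mem_zip hp).1, hb _ (List.of_mem_zip hp).2⟩
  simp only [List.zip_cons_cons, List.forall_mem_cons]
  refine ⟨⟨iff_of_false (lt_irrefl a) (lt_irrefl b), fun q hq => ?_⟩,
    fun p hp => ⟨?_, h.2 p hp⟩⟩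
  · exact iff_of_true (hab q hq).1 (hab q hq).2
  · exact iff_of_false (hab p hp).1.not_gt (hab p hp).2.not_gt

end OrderIsomorphic

theorem containsPat_iff_exists_sublist (π σ : List ℕ) :
    ContainsPat π σ ↔ ∃ s : List ℕ, s.Sublist π ∧ IsOrderIsomorphic s σ := by
  simp only [isOrderIsomorphic_iff_getElem, List.sublist_iff_exists_fin_orderEmbedding_get_eq]
  constructor
  · rintro ⟨f, hf, hiso⟩
    refine ⟨List.ofFn fun i => π.get (f i),
      ⟨OrderEmbedding.ofStrictMono (fun i => f (i.cast List.length_ofFn)) fun _ _ hij => hf hij,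
        fun i => by rw [List.get_ofFn]; rfl⟩,
      List.length_ofFn, fun i j hi hj => ?_⟩
    simpa using (hiso ⟨i, by simpa using hi⟩ ⟨j, by simpa using hj⟩).symm
  · rintro ⟨s, ⟨e, he⟩, hlen, hiso⟩
    refine ⟨fun i => e (i.cast hlen.symm), fun i j hij => e.strictMono hij, fun i j => ?_⟩
    change _ ↔ π.get (e _) < π.get (e _)
    rw [← he, ← he]
    simpa using (hiso i j (by omega) (by omega)).symm

theorem sublist_dropFirstBlock_iff {ρ : List ℕ} (π : List ℕ) (hρ : ∀ r ∈ ρ, 0 < r) :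
    ρ.Sublist (dropFirstBlock π) ↔ (ρ.map (· + 1)).Sublist π := by
  constructor
  · intro h
    exact (map_add_one_dropFirstBlock π ▸ h.map (· + 1)).trans List.filter_sublist
  · intro h
    have := (h.filter (1 < ·)).map (· - 1)
    have hfilter : (ρ.map (· + 1)).filter (1 < ·) = ρ.map (· + 1) :=
      List.filter_eq_self.2 (by simpa using hρ)
    simpa [hfilter, Function.comp_def, dropFirstBlock] using this

theorem containsPat_one_cons_iff {τ x : List ℕ} (hτ : ∀ d ∈ τ, 0 < d) (hx : ∀ a ∈ x, 0 < a) :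
    ContainsPat (1 :: x) (1 :: τ.map (· + 1)) ↔ ContainsPat (dropFirstBlock x) τ := by
  have hshift := isOrderIsomorphic_map_iff (f := (· + 1)) (g := (· + 1))
    (fun _ _ => Nat.succ_lt_succ) (fun _ _ => Nat.succ_lt_succ)
  have hτ1 : ∀ d ∈ τ.map (· + 1), 1 < d := by simpa using hτ
  simp only [containsPat_iff_exists_sublist]
  constructor
  · rintro ⟨_ | ⟨v, s⟩, hsub, hiso⟩
    · exact absurd hiso.1 (by simp)
    have hv : 0 < v := by
      rcases hsub.subset List.mem_cons_self with h | ⟨_, h⟩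
      exacts [one_pos, hx v h]
    have hs : ∀ c ∈ s, 1 < c := fun c hc => by have := hiso.lt_of_cons hτ1 c hc; omega
    obtain ⟨ρ, rfl⟩ : ∃ ρ : List ℕ, ρ.map (· + 1) = s :=
      ⟨s.map (· - 1), by rw [List.map_map]; exact (List.map_congr_left fun c hc =>
        Nat.sub_add_cancel (hs c hc).le).trans (List.map_id s)⟩
    refine ⟨ρ, (sublist_dropFirstBlock_iff x (by simpa using hs)).2 ?_,
      (hshift ρ τ).1 hiso.of_cons⟩
    exact hsub.of_cons_cons
  · rintro ⟨ρ, hsub, hiso⟩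
    have hρ : ∀ r ∈ ρ, 0 < r := fun r hr => dropFirstBlock_pos x r (hsub.subset hr)
    refine ⟨1 :: ρ.map (· + 1), ((sublist_dropFirstBlock_iff x hρ).1 hsub).cons_cons 1, ?_⟩
    exact ((hshift ρ τ).2 hiso).cons (by simpa using hρ) hτ1

def dropFirstBlockFiber (m : ℕ) (ρ : List ℕ) : Set (List ℕ) :=
  {x | x.length = m ∧ (∀ a ∈ x, 0 < a) ∧ dropFirstBlock x = ρ}

theorem dropFirstBlockFiber_zero_nil : dropFirstBlockFiber 0 [] = {[]} := by
  ext x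
  simp +contextual [dropFirstBlockFiber, List.length_eq_zero_iff]

theorem dropFirstBlockFiber_zero_cons (r : ℕ) (ρ : List ℕ) :
    dropFirstBlockFiber 0 (r :: ρ) = ∅ := by
  ext x
  simp +contextual [dropFirstBlockFiber, List.length_eq_zero_iff]

theorem dropFirstBlockFiber_succ_nil (m : ℕ) :
    dropFirstBlockFiber (m + 1) [] = (1 :: ·) '' dropFirstBlockFiber m [] := by
  ext (_ | ⟨a, x⟩)
  · simp [dropFirstBlockFiber]
  · rcases a with _ | _ | a <;> simp [dropFirstBlockFiber]

theorem dropFirstBlockFiber_succ_cons (m : ℕ) {r : ℕ} (hr : 0 < r) (ρ : List ℕ) :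
    dropFirstBlockFiber (m + 1) (r :: ρ) =
      (1 :: ·) '' dropFirstBlockFiber m (r :: ρ) ∪ ((r + 1) :: ·) '' dropFirstBlockFiber m ρ := by
  ext (_ | ⟨a, x⟩)
  · simp [dropFirstBlockFiber]
  · rcases a with _ | _ | a <;> simp [dropFirstBlockFiber, hr.ne', eq_comm (a := r)]
    tauto

theorem encard_dropFirstBlockFiber (m : ℕ) {ρ : List ℕ} (hρ : ∀ r ∈ ρ, 0 < r) :
    (dropFirstBlockFiber m ρ).encard = m.choose ρ.length := by
  induction m generalizing ρ with
  | zero =>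
    rcases ρ with _ | ⟨r, ρ⟩
    · simp [dropFirstBlockFiber_zero_nil]
    · simp [dropFirstBlockFiber_zero_cons]
  | succ m ih =>
    rcases ρ with _ | ⟨r, ρ⟩
    · rw [dropFirstBlockFiber_succ_nil, List.cons_injective.encard_image, ih (by simp)]
      simp
    · have hr : 0 < r := hρ r List.mem_cons_self
      have hdisj : Disjoint ((1 :: ·) '' dropFirstBlockFiber m (r :: ρ))
          (((r + 1) :: ·) '' dropFirstBlockFiber m ρ) := by
        rw [Set.disjoint_left]
        rintro _ ⟨x, -, rfl⟩ ⟨y, -, h⟩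
        simp only [List.cons.injEq] at h
        omega
      rw [dropFirstBlockFiber_succ_cons m hr, Set.encard_union_eq hdisj,
        List.cons_injective.encard_image, List.cons_injective.encard_image, ih hρ,
        ih fun r' hr' => hρ r' (List.mem_cons_of_mem r hr')]
      simp [Nat.choose_succ_succ', add_comm]

theorem pairwiseDisjoint_dropFirstBlockFiber (m : ℕ) (s : Set (List ℕ)) :
    s.PairwiseDisjoint (dropFirstBlockFiber m) := fun _ _ _ _ hne =>
  Set.disjoint_left.2 fun _ hx hx' => hne (hx.2.2.symm.trans hx'.2.2)

theorem ncard_setOf_dropFirstBlock_mem (m : ℕ) {A : Set (List ℕ)}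
    (hA : ∀ ρ ∈ A, ∀ r ∈ ρ, 0 < r) (hfin : ∀ i, {ρ | ρ.length = i ∧ ρ ∈ A}.Finite) :
    {x : List ℕ | x.length = m ∧ (∀ a ∈ x, 0 < a) ∧ dropFirstBlock x ∈ A}.ncard =
      ∑ i ∈ Finset.range (m + 1), m.choose i * {ρ | ρ.length = i ∧ ρ ∈ A}.ncard := by
  have hfiber : ∀ ρ ∈ A, (dropFirstBlockFiber m ρ).Finite ∧
      (dropFirstBlockFiber m ρ).ncard = m.choose ρ.length := fun ρ hρ =>
    have h := encard_dropFirstBlockFiber m (hA ρ hρ)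
    ⟨Set.finite_of_encard_eq_coe h, by rw [Set.ncard_def, h, ENat.toNat_natCast]⟩
  have hunion : {x : List ℕ | x.length = m ∧ (∀ a ∈ x, 0 < a) ∧ dropFirstBlock x ∈ A} =
      ⋃ i ∈ (Finset.range (m + 1) : Set ℕ), ⋃ ρ ∈ {ρ | ρ.length = i ∧ ρ ∈ A},
        dropFirstBlockFiber m ρ := by
    ext x
    simp only [dropFirstBlockFiber, Set.mem_iUnion, Set.mem_ofPred_eq, Finset.coe_range,
      Set.mem_Iio, exists_prop]
    constructor
    · rintro ⟨hx, hpos, hmem⟩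
      have := length_dropFirstBlock_le x
      exact ⟨_, by omega, _, ⟨rfl, hmem⟩, hx, hpos, rfl⟩
    · rintro ⟨i, -, ρ, ⟨-, hρ⟩, hx, hpos, rfl⟩
      exact ⟨hx, hpos, hρ⟩
  rw [hunion, Set.Finite.ncard_biUnion (Finset.finite_toSet _), finsum_mem_coe_finset]
  · refine Finset.sum_congr rfl fun i _ => ?_
    rw [Set.Finite.ncard_biUnion (hfin i) (fun ρ hρ => (hfiber ρ hρ.2).1),
      finsum_mem_congr rfl fun ρ hρ => (hfiber ρ hρ.2).2.trans (congrArg _ hρ.1),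
      ← finsum_one, mul_finsum_mem, mul_one]
    exact pairwiseDisjoint_dropFirstBlockFiber m _
  · exact fun i _ => (hfin i).biUnion fun ρ hρ => (hfiber ρ hρ.2).1
  · intro i _ j _ hij
    simp only [Function.onFun, Set.disjoint_iUnion_left, Set.disjoint_iUnion_right]
    rintro ρ ⟨rfl, -⟩ ρ' ⟨rfl, -⟩
    exact pairwiseDisjoint_dropFirstBlockFiber m Set.univ trivial trivial fun h => hij (h ▸ rfl)

theorem setOf_avoiders_one_cons_eq_image {τ : List ℕ} (hτ : ∀ d ∈ τ, 0 < d) (m : ℕ) :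
    {π : List ℕ | π.length = m + 1 ∧ IsCanonicalSeq π ∧ AvoidsPat π (1 :: τ.map (· + 1))} =
      (1 :: ·) '' {x | x.length = m ∧ (∀ a ∈ x, 0 < a) ∧
        dropFirstBlock x ∈ {ρ | IsCanonicalSeq ρ ∧ AvoidsPat ρ τ}} := by
  ext (_ | ⟨a, x⟩)
  · simp
  · simp only [Set.mem_ofPred_eq, Set.mem_image, List.cons.injEq, List.length_cons,
      isCanonicalSeq_cons_iff, AvoidsPat]
    constructor
    · rintro ⟨hx, ⟨rfl, hpos, hcan⟩, havoid⟩
      exact ⟨x, ⟨by omega, hpos, hcan, (containsPat_one_cons_iff hτ hpos).not.1 havoid⟩, rfl, rfl⟩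
    · rintro ⟨x, ⟨hx, hpos, hcan, havoid⟩, rfl, rfl⟩
      exact ⟨by omega, ⟨rfl, hpos, hcan⟩, (containsPat_one_cons_iff hτ hpos).not.2 havoid⟩

/-- For a canonical sequence τ and σ = 1(τ+1),
p(n;σ) = Σ_{i=0}^{n-1} C(n-1,i) p(i;τ) for every n ≥ 1. -/
theorem statement2 (τ : List ℕ) (hτ : IsCanonicalSeq τ) (n : ℕ) (hn : 1 ≤ n) :
    pAvoid n (1 :: τ.map (· + 1)) =
      ∑ i ∈ Finset.range n, Nat.choose (n - 1) i * pAvoid i τ := by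
  obtain ⟨m, rfl⟩ : ∃ m, n = m + 1 := ⟨n - 1, by omega⟩
  have hτpos : ∀ d ∈ τ, 0 < d := ((isCanonicalSeq_iff_isCanonicalAfter_zero τ).1 hτ).pos
  rw [pAvoid, setOf_avoiders_one_cons_eq_image hτpos,
    Set.ncard_image_of_injective _ List.cons_injective, Nat.add_sub_cancel]
  refine ncard_setOf_dropFirstBlock_mem m (fun ρ hρ => ?_) fun i => ?_
  · exact ((isCanonicalSeq_iff_isCanonicalAfter_zero ρ).1 hρ.1).pos
  · exact (finite_setOf_length_eq_isCanonicalSeq i).subset fun ρ hρ => ⟨hρ.1, hρ.2.1⟩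
end

section
/- Let τ and τ′ be canonical sequences of partitions. Then τ ∼ τ′ if and only if 1(τ+1) ∼ 1(τ′+1). Moreover, if τ ∼ τ′, then for every k ≥ 1 the pattern 12⋯k(τ+k) is equivalent to the pattern 12⋯k(τ′+k). -/
namespace SetPartitionPattern

/-- Restricted growth after a prefix whose maximum is `M`. -/
def IsRGFrom : ℕ → List ℕ → Prop
  | _, [] => True
  | M, x :: l => 1 ≤ x ∧ x ≤ M + 1 ∧ IsRGFrom (max M x) l

lemma isRGFrom_iff (π : List ℕ) (M : ℕ) : IsRGFrom M π ↔
    ∀ i (h : i < π.length), 1 ≤ π[i] ∧ π[i] ≤ max M ((π.take i).foldr max 0) + 1 := by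
  induction π generalizing M with
  | nil => simp [IsRGFrom]
  | cons x l ih =>
    rw [IsRGFrom, ih]
    constructor
    · rintro ⟨h1, h2, h3⟩ (_ | i) hi
      · simp [h1, h2]
      · simpa [max_assoc] using h3 i (by simpa using hi)
    · intro h
      have h0 := h 0 (by simp)
      simp only [List.getElem_cons_zero, List.take_zero, List.foldr_nil, max_zero] at h0
      refine ⟨h0.1, h0.2, fun i hi => ?_⟩
      have hi' := h (i + 1) (by simpa using hi)
      simpa only [List.getElem_cons_succ, List.take_succ_cons, List.foldr_cons, max_assoc] using hi'

lemma isCanonicalSeq_iff_isRGFrom_zero (π : List ℕ) : IsCanonicalSeq π ↔ IsRGFrom 0 π := by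
  simp [IsCanonicalSeq, isRGFrom_iff]

lemma IsRGFrom.one_le {M : ℕ} {π : List ℕ} (h : IsRGFrom M π) : ∀ x ∈ π, 1 ≤ x := by
  induction π generalizing M with
  | nil => simp
  | cons y l ih => exact List.forall_mem_cons.2 ⟨h.1, ih h.2.2⟩

lemma IsRGFrom.le_add_length {M : ℕ} {π : List ℕ} (h : IsRGFrom M π) :
    ∀ x ∈ π, x ≤ M + π.length := by
  induction π generalizing M with
  | nil => simp
  | cons y l ih =>
    obtain ⟨-, hy, hl⟩ := h
    simp only [List.forall_mem_cons, List.length_cons]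
    exact ⟨by omega, fun x hx => by have := ih hl x hx; omega⟩

def stripOnes (π : List ℕ) : List ℕ := (π.filter (1 < ·)).map (· - 1)

@[simp] lemma stripOnes_nil : stripOnes [] = [] := rfl

@[simp] lemma stripOnes_one_cons (l : List ℕ) : stripOnes (1 :: l) = stripOnes l := by
  simp [stripOnes]

lemma stripOnes_cons_of_one_lt {x : ℕ} (hx : 1 < x) (l : List ℕ) :
    stripOnes (x :: l) = (x - 1) :: stripOnes l := by
  simp [stripOnes, hx]

lemma isRGFrom_succ_iff {π : List ℕ} (hπ : ∀ x ∈ π, 1 ≤ x) (M : ℕ) :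
    IsRGFrom (M + 1) π ↔ IsRGFrom M (stripOnes π) := by
  induction π generalizing M with
  | nil => simp [stripOnes, IsRGFrom]
  | cons x l ih =>
    obtain ⟨hx, hl⟩ := List.forall_mem_cons.1 hπ
    by_cases h1 : 1 < x
    · have hmax : max (M + 1) x = max M (x - 1) + 1 := by omega
      simp only [stripOnes_cons_of_one_lt h1, IsRGFrom, hmax, ih hl]
      constructor <;> rintro ⟨-, h2, h3⟩ <;> exact ⟨by omega, by omega, h3⟩
    · obtain rfl : x = 1 := by omega
      simp [IsRGFrom, ih hl]

lemma IsCanonicalSeq.one_le {π : List ℕ} (h : IsCanonicalSeq π) : ∀ x ∈ π, 1 ≤ x :=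
  ((isCanonicalSeq_iff_isRGFrom_zero π).1 h).one_le

lemma IsCanonicalSeq.le_length {π : List ℕ} (h : IsCanonicalSeq π) : ∀ x ∈ π, x ≤ π.length := by
  simpa using ((isCanonicalSeq_iff_isRGFrom_zero π).1 h).le_add_length

lemma IsCanonicalSeq.head_eq_one {x : ℕ} {π : List ℕ} (h : IsCanonicalSeq (x :: π)) : x = 1 := by
  have := (isCanonicalSeq_iff_isRGFrom_zero _).1 h
  simp only [IsRGFrom] at this
  omega

lemma isCanonicalSeq_one_cons_iff (π : List ℕ) :
    IsCanonicalSeq (1 :: π) ↔ (∀ x ∈ π, 1 ≤ x) ∧ IsCanonicalSeq (stripOnes π) := by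
  simp only [isCanonicalSeq_iff_isRGFrom_zero, IsRGFrom, le_refl, zero_add, true_and]
  exact ⟨fun h => ⟨h.one_le, (isRGFrom_succ_iff h.one_le 0).1 h⟩,
    fun ⟨hπ, h⟩ => (isRGFrom_succ_iff hπ 0).2 h⟩

/-- An occurrence of a pattern, as the list of pairs (entry of the text, entry of the pattern)
that it matches. -/
def IsOrderPreserving (s : List (ℕ × ℕ)) : Prop :=
  ∀ p ∈ s, ∀ q ∈ s, p.1 < q.1 ↔ p.2 < q.2

lemma containsPat_iff_exists_pairs (π σ : List ℕ) :
    ContainsPat π σ ↔ ∃ s : List (ℕ × ℕ),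
      (s.map Prod.fst).Sublist π ∧ s.map Prod.snd = σ ∧ IsOrderPreserving s := by
  constructor
  · rintro ⟨f, hf, hord⟩
    refine ⟨List.ofFn fun i => (π.get (f i), σ.get i), ?_,
      by simp [List.map_ofFn, Function.comp_def], ?_⟩
    · rw [List.map_ofFn, List.sublist_iff_exists_fin_orderEmbedding_get_eq]
      refine ⟨(Fin.castOrderIso (by simp)).toOrderEmbedding.trans
        (OrderEmbedding.ofStrictMono f hf), fun i => ?_⟩
      simp [Fin.cast]
    · simp only [IsOrderPreserving, List.mem_ofFn, forall_exists_index, forall_apply_eq_imp_iff]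
      exact fun i j => (hord i j).symm
  · rintro ⟨s, hsub, rfl, hord⟩
    obtain ⟨g, hg⟩ := List.sublist_iff_exists_fin_orderEmbedding_get_eq.1 hsub
    refine ⟨fun i => g (i.cast (by simp)), fun i j hij => g.strictMono hij, fun i j => ?_⟩
    simp only [← hg]
    simpa using (hord s[i.1] (by simp) s[j.1] (by simp)).symm

lemma map_sub_one_map_add_one (l : List ℕ) : (l.map (· + 1)).map (· - 1) = l := by
  simp [Function.comp_def]

lemma containsPat_map_succ_iff (π σ : List ℕ) :
    ContainsPat (π.map (· + 1)) (σ.map (· + 1)) ↔ ContainsPat π σ := by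
  simp only [containsPat_iff_exists_pairs]
  constructor
  · rintro ⟨s, hsub, hsnd, hord⟩
    have hpos : ∀ p ∈ s, 1 ≤ p.1 ∧ 1 ≤ p.2 := fun p hp => by
      have h1 := hsub.subset (List.mem_map_of_mem hp)
      have h2 : p.2 ∈ σ.map (· + 1) := hsnd ▸ List.mem_map_of_mem hp
      simp only [List.mem_map] at h1 h2
      omega
    refine ⟨s.map (Prod.map (· - 1) (· - 1)), ?_, ?_, ?_⟩
    · have := hsub.map (· - 1)
      rw [map_sub_one_map_add_one] at this
      simpa [List.map_map, Function.comp_def] using this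
    · have := congrArg (List.map (· - 1)) hsnd
      rw [map_sub_one_map_add_one] at this
      simpa [List.map_map, Function.comp_def] using this
    · simp only [IsOrderPreserving, List.mem_map, forall_exists_index, and_imp,
        forall_apply_eq_imp_iff₂, Prod.map]
      intro p hp q hq
      have := hord p hp q hq
      have := hpos p hp
      have := hpos q hq
      omega
  · rintro ⟨s, hsub, rfl, hord⟩
    refine ⟨s.map (Prod.map (· + 1) (· + 1)), ?_, by simp [List.map_map, Function.comp_def], ?_⟩
    · simpa [List.map_map, Function.comp_def] using hsub.map (· + 1)
    · simp only [IsOrderPreserving, List.mem_map, forall_exists_index, and_imp,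
        forall_apply_eq_imp_iff₂, Prod.map, add_lt_add_iff_right]
      exact hord

lemma containsPat_one_cons_iff {π σ : List ℕ} (hπ : ∀ x ∈ π, 1 ≤ x) (hσ : ∀ y ∈ σ, 1 < y) :
    ContainsPat (1 :: π) (1 :: σ) ↔ ContainsPat (π.filter (1 < ·)) σ := by
  simp only [containsPat_iff_exists_pairs]
  constructor
  · rintro ⟨_ | ⟨p, s⟩, hsub, hsnd, hord⟩
    · simp at hsnd
    obtain ⟨hp, rfl⟩ := List.cons_eq_cons.1 hsnd
    have hp1 : 1 ≤ p.1 := List.forall_mem_cons.2 ⟨le_rfl, hπ⟩ p.1 (hsub.subset (by simp))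
    have habove : ∀ q ∈ s, 1 < q.1 := fun q hq => by
      have := (hord p (by simp) q (by simp [hq])).2 (hp ▸ hσ q.2 (List.mem_map_of_mem hq))
      omega
    refine ⟨s, ?_, rfl, fun q hq r hr => hord q (by simp [hq]) r (by simp [hr])⟩
    have := hsub.tail.filter (1 < ·)
    rwa [List.map_cons, List.tail_cons, List.tail_cons,
      List.filter_eq_self.2 (by simpa using habove)] at this
  · rintro ⟨s, hsub, rfl, hord⟩
    refine ⟨(1, 1) :: s, (hsub.trans List.filter_sublist).cons_cons 1, rfl, ?_⟩
    have habove : ∀ q ∈ s, 1 < q.1 ∧ 1 < q.2 := fun q hq =>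
      ⟨by simpa using (List.mem_filter.1 (hsub.subset (List.mem_map_of_mem hq))).2,
        hσ q.2 (List.mem_map_of_mem hq)⟩
    simp only [IsOrderPreserving, List.forall_mem_cons, lt_irrefl]
    refine ⟨⟨trivial, fun q hq => ?_⟩, fun q hq => ⟨?_, hord q hq⟩⟩ <;>
      have := habove q hq <;> omega

lemma containsPat_one_cons_map_succ_iff {π σ : List ℕ} (hπ : ∀ x ∈ π, 1 ≤ x)
    (hσ : ∀ y ∈ σ, 1 ≤ y) :
    ContainsPat (1 :: π) (1 :: σ.map (· + 1)) ↔ ContainsPat (stripOnes π) σ := by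
  have hfilter : (stripOnes π).map (· + 1) = π.filter (1 < ·) := by
    rw [stripOnes, List.map_map]
    refine (List.map_congr_left fun x hx => ?_).trans (List.map_id _)
    exact Nat.sub_add_cancel (by simpa using (List.mem_filter.1 hx).2 : 1 < x).le
  have hσ' : ∀ y ∈ σ.map (· + 1), 1 < y := by
    simpa using fun y hy => Nat.lt_succ_of_le (hσ y hy)
  rw [containsPat_one_cons_iff hπ hσ', ← hfilter, containsPat_map_succ_iff]

def oneMask (π : List ℕ) : List Bool := π.map (1 < ·)

@[simp] lemma oneMask_nil : oneMask [] = [] := rfl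

@[simp] lemma oneMask_cons (x : ℕ) (l : List ℕ) :
    oneMask (x :: l) = decide (1 < x) :: oneMask l := rfl

/-- Inverse of `π ↦ (oneMask π, stripOnes π)` on lists of positive entries. -/
def mergeOnes : List Bool → List ℕ → List ℕ
  | [], _ => []
  | false :: c, ρ => 1 :: mergeOnes c ρ
  | true :: _, [] => []
  | true :: c, r :: ρ => (r + 1) :: mergeOnes c ρ

lemma count_oneMask (π : List ℕ) : (oneMask π).count true = (stripOnes π).length := by
  simp [oneMask, stripOnes, List.count_eq_countP, List.countP_eq_length_filter, List.filter_map,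
    Function.comp_def]

lemma mergeOnes_oneMask_stripOnes {π : List ℕ} (hπ : ∀ x ∈ π, 1 ≤ x) :
    mergeOnes (oneMask π) (stripOnes π) = π := by
  induction π with
  | nil => rfl
  | cons x l ih =>
    obtain ⟨hx, hl⟩ := List.forall_mem_cons.1 hπ
    by_cases h1 : 1 < x
    · rw [stripOnes_cons_of_one_lt h1, oneMask_cons, decide_eq_true h1, mergeOnes, ih hl]
      congr
      omega
    · obtain rfl : x = 1 := by omega
      simp [mergeOnes, ih hl]

lemma one_le_of_mem_mergeOnes (c : List Bool) (ρ : List ℕ) : ∀ x ∈ mergeOnes c ρ, 1 ≤ x := by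
  fun_induction mergeOnes c ρ <;> simp_all

section
variable {c : List Bool} {ρ : List ℕ}

lemma length_mergeOnes (hc : c.count true = ρ.length) : (mergeOnes c ρ).length = c.length := by
  fun_induction mergeOnes c ρ <;> simp_all

lemma oneMask_mergeOnes (hc : c.count true = ρ.length) (hρ : ∀ r ∈ ρ, 1 ≤ r) :
    oneMask (mergeOnes c ρ) = c := by
  fun_induction mergeOnes c ρ <;> simp_all [Nat.pos_iff_ne_zero, Nat.one_le_iff_ne_zero]

lemma stripOnes_mergeOnes (hc : c.count true = ρ.length) (hρ : ∀ r ∈ ρ, 1 ≤ r) :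
    stripOnes (mergeOnes c ρ) = ρ := by
  fun_induction mergeOnes c ρ with
  | case1 ρ => simpa [eq_comm] using hc
  | case2 c ρ ih => simp_all
  | case3 c => simp at hc
  | case4 c r ρ ih =>
    simp only [List.count_cons_self, List.length_cons, add_left_inj] at hc
    obtain ⟨hr, hρ⟩ := List.forall_mem_cons.1 hρ
    rw [stripOnes_cons_of_one_lt (by omega), ih hc hρ, Nat.add_sub_cancel]

end

def canonicalAvoiders (n : ℕ) (σ : List ℕ) : Set (List ℕ) :=
  {π | π.length = n ∧ IsCanonicalSeq π ∧ AvoidsPat π σ}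

lemma finite_canonicalAvoiders (n : ℕ) (σ : List ℕ) : (canonicalAvoiders n σ).Finite := by
  refine ((List.finite_length_eq (Fin (n + 1)) n).image (List.map Fin.val)).subset ?_
  rintro π ⟨hlen, hcan, -⟩
  refine ⟨π.map (Fin.ofNat (n + 1)), by simp [hlen], ?_⟩
  rw [List.map_map]
  refine (List.map_congr_left fun x hx => ?_).trans (List.map_id π)
  have := IsCanonicalSeq.le_length hcan x hx
  simp [Nat.mod_eq_of_lt (by omega : x < n + 1)]

lemma eq_one_cons_tail_of_mem_canonicalAvoiders {m : ℕ} {σ π : List ℕ}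
    (h : π ∈ canonicalAvoiders (m + 1) σ) : π = 1 :: π.tail := by
  obtain ⟨hlen, hcan, -⟩ := h
  cases π with
  | nil => simp at hlen
  | cons x l => rw [IsCanonicalSeq.head_eq_one hcan, List.tail_cons]

lemma one_cons_mem_canonicalAvoiders_iff {m : ℕ} {τ : List ℕ} (hτ : ∀ t ∈ τ, 1 ≤ t)
    (π : List ℕ) : 1 :: π ∈ canonicalAvoiders (m + 1) (1 :: τ.map (· + 1)) ↔
      π.length = m ∧ (∀ x ∈ π, 1 ≤ x) ∧ IsCanonicalSeq (stripOnes π) ∧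
        AvoidsPat (stripOnes π) τ := by
  simp only [canonicalAvoiders, Set.mem_ofPred_eq, List.length_cons, add_left_inj,
    isCanonicalSeq_one_cons_iff, AvoidsPat]
  constructor
  · rintro ⟨hlen, ⟨hπ, hcan⟩, hav⟩
    exact ⟨hlen, hπ, hcan, by rwa [containsPat_one_cons_map_succ_iff hπ hτ] at hav⟩
  · rintro ⟨hlen, hπ, hcan, hav⟩
    exact ⟨hlen, ⟨hπ, hcan⟩, by rwa [containsPat_one_cons_map_succ_iff hπ hτ]⟩

def canonicalAvoidersOneConsEquiv (m : ℕ) {τ : List ℕ} (hτ : ∀ t ∈ τ, 1 ≤ t) :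
    canonicalAvoiders (m + 1) (1 :: τ.map (· + 1)) ≃
      Σ v : List.Vector Bool m, canonicalAvoiders (v.toList.count true) τ where
  toFun π :=
    have h := (one_cons_mem_canonicalAvoiders_iff hτ _).1
      (eq_one_cons_tail_of_mem_canonicalAvoiders π.2 ▸ π.2)
    ⟨⟨oneMask π.1.tail, by rw [oneMask, List.length_map, h.1]⟩,
      ⟨stripOnes π.1.tail, (count_oneMask _).symm, h.2.2⟩⟩
  invFun vρ :=
    have hc : vρ.1.toList.count true = vρ.2.1.length := vρ.2.2.1.symm
    have hρ := IsCanonicalSeq.one_le vρ.2.2.2.1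
    ⟨1 :: mergeOnes vρ.1.toList vρ.2, (one_cons_mem_canonicalAvoiders_iff hτ _).2
      ⟨by simp [length_mergeOnes hc], one_le_of_mem_mergeOnes _ _,
        by simpa [stripOnes_mergeOnes hc hρ] using vρ.2.2.2⟩⟩
  left_inv π := by
    have h := (one_cons_mem_canonicalAvoiders_iff hτ _).1
      (eq_one_cons_tail_of_mem_canonicalAvoiders π.2 ▸ π.2)
    ext1
    change 1 :: mergeOnes (oneMask π.1.tail) (stripOnes π.1.tail) = π.1
    rw [mergeOnes_oneMask_stripOnes h.2.1]
    exact (eq_one_cons_tail_of_mem_canonicalAvoiders π.2).symm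
  right_inv := by
    rintro ⟨v, ρ, hlen, hcan, -⟩
    have hc : v.toList.count true = ρ.length := hlen.symm
    have hρ := IsCanonicalSeq.one_le hcan
    exact Sigma.subtype_ext (List.Vector.toList_injective (oneMask_mergeOnes hc hρ))
      (stripOnes_mergeOnes hc hρ)

lemma pAvoid_succ_one_cons (m : ℕ) {τ : List ℕ} (hτ : ∀ t ∈ τ, 1 ≤ t) :
    pAvoid (m + 1) (1 :: τ.map (· + 1)) =
      ∑ v : List.Vector Bool m, pAvoid (v.toList.count true) τ := by
  have := fun n => (finite_canonicalAvoiders n τ).to_subtype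
  change (canonicalAvoiders _ _).ncard = _
  rw [← Nat.card_coe_set_eq, Nat.card_congr (canonicalAvoidersOneConsEquiv m hτ),
    Nat.card_sigma]
  rfl

/-- The `m`-th sum is `f m` plus values of `f` below `m`. -/
lemma eq_of_sum_vector_count_eq {f g : ℕ → ℕ}
    (h : ∀ m, ∑ v : List.Vector Bool m, f (v.toList.count true) =
      ∑ v : List.Vector Bool m, g (v.toList.count true)) (m : ℕ) : f m = g m := by
  induction m using Nat.strong_induction_on with
  | _ m ih =>
    set top := List.Vector.replicate m true
    have hlt : ∀ v ∈ Finset.univ.erase top, v.toList.count true < m := by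
      intro v hv
      refine lt_of_le_of_ne (List.count_le_length.trans_eq v.toList_length) fun heq => ?_
      refine Finset.ne_of_mem_erase hv (List.Vector.toList_injective ?_)
      refine List.eq_replicate_iff.2 ⟨v.toList_length, fun b hb => ?_⟩
      exact (List.count_eq_length.1 (heq.trans v.toList_length.symm) b hb).symm
    have hm := h m
    rw [← Finset.add_sum_erase _ _ (Finset.mem_univ top),
      ← Finset.add_sum_erase _ _ (Finset.mem_univ top),
      Finset.sum_congr rfl fun v hv => ih _ (hlt v hv)] at hm
    simpa [top, List.Vector.replicate] using hm

lemma pAvoid_zero_cons (a : ℕ) (σ : List ℕ) : pAvoid 0 (a :: σ) = 1 := by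
  have hav : AvoidsPat [] (a :: σ) := fun ⟨f, _⟩ => (f 0).elim0
  rw [pAvoid, ← Set.ncard_singleton ([] : List ℕ)]
  congr 1
  ext π
  simp only [List.length_eq_zero_iff, Set.mem_ofPred_eq, Set.mem_singleton_iff,
    and_iff_left_iff_imp]
  rintro rfl
  exact ⟨fun i h => by simp at h, hav⟩

lemma patEquiv_iff_one_cons_map_succ {τ τ' : List ℕ} (hτ : ∀ t ∈ τ, 1 ≤ t)
    (hτ' : ∀ t ∈ τ', 1 ≤ t) :
    PatEquiv τ τ' ↔ PatEquiv (1 :: τ.map (· + 1)) (1 :: τ'.map (· + 1)) := by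
  constructor
  · rintro h (_ | m)
    · rw [pAvoid_zero_cons, pAvoid_zero_cons]
    · rw [pAvoid_succ_one_cons m hτ, pAvoid_succ_one_cons m hτ']
      exact Finset.sum_congr rfl fun v _ => h _
  · intro h
    refine eq_of_sum_vector_count_eq (f := (pAvoid · τ)) (g := (pAvoid · τ')) fun m => ?_
    rw [← pAvoid_succ_one_cons m hτ, ← pAvoid_succ_one_cons m hτ']
    exact h (m + 1)

lemma iota_succ_append_map_add (k : ℕ) (τ : List ℕ) :
    iota (k + 1) ++ τ.map (· + (k + 1)) = 1 :: (iota k ++ τ.map (· + k)).map (· + 1) := by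
  simp [iota, List.range_succ_eq_map, Function.comp_def, add_assoc, add_comm 1]

lemma one_le_of_mem_iota_append_map_add {τ : List ℕ} (hτ : ∀ t ∈ τ, 1 ≤ t) (k : ℕ) :
    ∀ t ∈ iota k ++ τ.map (· + k), 1 ≤ t := by
  simp only [iota, List.mem_append, List.mem_map]
  rintro _ (⟨i, -, rfl⟩ | ⟨t, ht, rfl⟩)
  · omega
  · have := hτ t ht
    omega

end SetPartitionPattern

open SetPartitionPattern in
/-- For canonical sequences τ, τ': τ ∼ τ' iff
1(τ+1) ∼ 1(τ'+1); moreover if τ ∼ τ' then for every k ≥ 1 the patterns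
1…k(τ+k) and 1…k(τ'+k) are equivalent. -/
theorem statement3 (τ τ' : List ℕ) (hτ : IsCanonicalSeq τ) (hτ' : IsCanonicalSeq τ') :
    (PatEquiv τ τ' ↔ PatEquiv (1 :: τ.map (· + 1)) (1 :: τ'.map (· + 1))) ∧
    (PatEquiv τ τ' → ∀ k : ℕ, 1 ≤ k →
      PatEquiv (iota k ++ τ.map (· + k)) (iota k ++ τ'.map (· + k))) := by
  have hτ1 := IsCanonicalSeq.one_le hτ
  have hτ1' := IsCanonicalSeq.one_le hτ'
  refine ⟨patEquiv_iff_one_cons_map_succ hτ1 hτ1', fun h => ?_⟩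
  suffices ∀ k, PatEquiv (iota k ++ τ.map (· + k)) (iota k ++ τ'.map (· + k)) from
    fun k _ => this k
  intro k
  induction k with
  | zero => simpa [iota] using h
  | succ k ih =>
    rw [iota_succ_append_map_add, iota_succ_append_map_add]
    exact (patEquiv_iff_one_cons_map_succ (one_le_of_mem_iota_append_map_add hτ1 k)
      (one_le_of_mem_iota_append_map_add hτ1' k)).1 ih
end

section
/- For all integers m ≥ 1 and all j, k with 1 ≤ j, k ≤ m, the pattern 1ʲ21^{m−j} is equivalent to the pattern 1ᵏ21^{m−k}. In fact, for every n and every k with 1 ≤ k ≤ m, there is a bijection from P(n; 1ᵏ21^{m−k}) to P(n; 1^m 2) that preserves the number of blocks and the size of each block of the partition. -/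
/-!
Let `c` be the least letter of a restricted growth sequence `π`, occurring `t` times. An
occurrence of `1^k 2 1^(m-k)` in `π` either avoids `c`, or has copies of `c` as its `1`s, which
happens exactly when some larger entry has at least `k` copies of `c` before it and `m - k` after.
So `π` is encoded by `t`, the subsequence `w` of larger letters (again a restricted growth
sequence), and for each entry of `w` the number `g ∈ [1, t]` of `c`'s before it; `π` avoids the
pattern iff `w` does and no `g` lies in `[k, t - m + k]`. The allowed values of `g` form a set
whose size does not depend on `k`, so relabelling them increasingly and recursing on `w` maps
the avoiders of `1^k 2 1^(m-k)` bijectively onto those of `1^k' 2 1^(m-k')`. Each sequence is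
only permuted, so the number and sizes of the blocks are kept.
-/

namespace PartitionPattern

open List

def gaps (c : ℕ) : ℕ → List ℕ → List ℕ
  | _, [] => []
  | acc, x :: xs => if x = c then gaps c (acc + 1) xs else acc :: gaps c acc xs

/-- Inverse of `gaps`: `cur` counts the `c`'s already written, `t` is their total. -/
def interleave (c : ℕ) : ℕ → ℕ → List ℕ → List ℕ → List ℕ
  | cur, t, x :: w, g :: gs => replicate (g - cur) c ++ x :: interleave c g t w gs
  | cur, t, _, _ => replicate (t - cur) c

section Gaps

variable (c : ℕ)

theorem gaps_bounds :
    ∀ (l : List ℕ) (acc : ℕ), ∀ g ∈ gaps c acc l, acc ≤ g ∧ g ≤ acc + l.count c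
  | [], _ => by simp [gaps]
  | x :: xs, acc => by
    intro g hg
    by_cases h : x = c
    · simp only [gaps, if_pos h] at hg
      have := gaps_bounds xs (acc + 1) g hg
      rw [h, count_cons_self]
      omega
    · simp only [gaps, if_neg h, mem_cons] at hg
      rw [count_cons_of_ne h]
      rcases hg with rfl | hg
      · omega
      · have := gaps_bounds xs acc g hg
        omega

theorem length_gaps :
    ∀ (l : List ℕ) (acc : ℕ), (gaps c acc l).length = (l.filter (· ≠ c)).length
  | [], _ => by simp [gaps]
  | x :: xs, acc => by by_cases h : x = c <;> simp [gaps, h, length_gaps xs]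

theorem pairwise_gaps : ∀ (l : List ℕ) (acc : ℕ), (gaps c acc l).Pairwise (· ≤ ·)
  | [], _ => by simp [gaps]
  | x :: xs, acc => by
    by_cases h : x = c
    · simpa [gaps, h] using pairwise_gaps xs (acc + 1)
    · simp only [gaps, if_neg h, pairwise_cons]
      exact ⟨fun g hg => (gaps_bounds c xs acc g hg).1, pairwise_gaps xs acc⟩

theorem gaps_replicate_append (n : ℕ) (acc : ℕ) (l : List ℕ) :
    gaps c acc (replicate n c ++ l) = gaps c (acc + n) l := by
  induction n generalizing acc with
  | zero => rfl
  | succ n ih =>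
    rw [replicate_succ, cons_append, gaps, if_pos rfl, ih, Nat.add_assoc, Nat.add_comm 1]

theorem mem_gaps_iff : ∀ (l : List ℕ) (acc g : ℕ),
    g ∈ gaps c acc l ↔ ∃ U b V, l = U ++ b :: V ∧ b ≠ c ∧ acc + U.count c = g
  | [], _, _ => by simp [gaps]
  | x :: xs, acc, g => by
    by_cases hx : x = c
    · rw [gaps, if_pos hx, mem_gaps_iff xs]
      constructor
      · rintro ⟨U, b, V, rfl, hb, rfl⟩
        exact ⟨x :: U, b, V, rfl, hb, by rw [hx, count_cons_self]; omega⟩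
      · rintro ⟨_ | ⟨y, U⟩, b, V, hl, hb, rfl⟩
        · simp only [nil_append, cons.injEq] at hl
          exact absurd (hl.1 ▸ hx) hb
        · obtain ⟨rfl, rfl⟩ := cons.inj hl
          exact ⟨U, b, V, rfl, hb, by rw [hx, count_cons_self]; omega⟩
    · rw [gaps, if_neg hx, mem_cons, mem_gaps_iff xs]
      constructor
      · rintro (rfl | ⟨U, b, V, rfl, hb, rfl⟩)
        · exact ⟨[], x, xs, rfl, hx, rfl⟩
        · exact ⟨x :: U, b, V, rfl, hb, by rw [count_cons_of_ne hx]⟩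
      · rintro ⟨_ | ⟨y, U⟩, b, V, hl, hb, rfl⟩
        · simp_all
        · obtain ⟨rfl, rfl⟩ := cons.inj hl
          exact Or.inr ⟨U, b, V, rfl, hb, by rw [count_cons_of_ne hx]⟩

theorem interleave_eq_cons (w gs : List ℕ) (a t : ℕ) (hgs : ∀ g ∈ gs, a < g) (ht : a < t) :
    interleave c a t w gs = c :: interleave c (a + 1) t w gs := by
  have key : ∀ n, a < n → replicate (n - a) c = c :: replicate (n - (a + 1)) c := fun n hn => by
    rw [← replicate_succ]; congr 1; omega
  match w, gs with
  | x :: w, g :: gs => simp only [interleave, key g (hgs g (mem_cons_self ..)), cons_append]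
  | [], _ => simp only [interleave, key t ht]
  | _ :: _, [] => simp only [interleave, key t ht]

theorem interleave_gaps : ∀ (l : List ℕ) (acc : ℕ),
    interleave c acc (acc + l.count c) (l.filter (· ≠ c)) (gaps c acc l) = l
  | [], acc => by simp [gaps, interleave]
  | x :: xs, acc => by
    by_cases h : x = c
    · rw [gaps, if_pos h, filter_cons_of_neg (by simpa using h), h, count_cons_self,
        interleave_eq_cons c _ _ _ _ (fun g hg => (gaps_bounds c xs (acc + 1) g hg).1) (by omega),
        ← Nat.add_assoc, Nat.add_right_comm, interleave_gaps xs (acc + 1)]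
    · rw [gaps, if_neg h, filter_cons_of_pos (by simpa using h), count_cons_of_ne h]
      simp only [interleave, Nat.sub_self, replicate_zero, nil_append, interleave_gaps xs acc]

structure GapData (cur t : ℕ) (w gs : List ℕ) : Prop where
  pairwise : gs.Pairwise (· ≤ ·)
  bounds : ∀ g ∈ gs, cur ≤ g ∧ g ≤ t
  length_eq : gs.length = w.length

theorem gapData_gaps_cons (xs : List ℕ) :
    GapData 1 ((c :: xs).count c) ((c :: xs).filter (· ≠ c)) (gaps c 0 (c :: xs)) where
  pairwise := pairwise_gaps c _ 0
  bounds g hg := by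
    rw [gaps, if_pos rfl] at hg
    simpa [Nat.add_comm] using gaps_bounds c xs 1 g hg
  length_eq := length_gaps c _ 0

variable {c}

theorem GapData.tail {cur t x g : ℕ} {w gs : List ℕ} (h : GapData cur t (x :: w) (g :: gs)) :
    GapData g t w gs where
  pairwise := (pairwise_cons.1 h.pairwise).2
  bounds g' hg' :=
    ⟨(pairwise_cons.1 h.pairwise).1 g' hg', (h.bounds g' (mem_cons_of_mem _ hg')).2⟩
  length_eq := by simpa using h.length_eq

theorem GapData.eq_nil {cur t : ℕ} {gs : List ℕ} (h : GapData cur t [] gs) : gs = [] :=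
  length_eq_zero_iff.1 h.length_eq

theorem GapData.of_le {cur cur' t : ℕ} {w gs : List ℕ} (h : GapData cur t w gs)
    (hle : cur' ≤ cur) :
    GapData cur' t w gs :=
  ⟨h.pairwise, fun g hg => ⟨hle.trans (h.bounds g hg).1, (h.bounds g hg).2⟩, h.length_eq⟩

theorem interleave_perm {cur t : ℕ} {w gs : List ℕ} (h : GapData cur t w gs)
    (hcur : cur ≤ t) :
    interleave c cur t w gs ~ replicate (t - cur) c ++ w := by
  induction w generalizing cur gs with
  | nil => simp [interleave]
  | cons x w ih =>
    obtain _ | ⟨g, gs⟩ := gs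
    · simpa using h.length_eq
    have hg := h.bounds g (mem_cons_self ..)
    calc interleave c cur t (x :: w) (g :: gs)
        = replicate (g - cur) c ++ x :: interleave c g t w gs := rfl
      _ ~ replicate (g - cur) c ++ x :: (replicate (t - g) c ++ w) :=
          ((ih h.tail hg.2).cons x).append_left _
      _ ~ replicate (g - cur) c ++ replicate (t - g) c ++ x :: w := by
          rw [append_assoc]; exact perm_middle.symm.append_left _
      _ = replicate (t - cur) c ++ x :: w := by
          rw [replicate_append_replicate]; congr 2; omega

theorem filter_interleave {cur t : ℕ} {w gs : List ℕ} (hw : c ∉ w)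
    (hlen : gs.length = w.length) :
    (interleave c cur t w gs).filter (· ≠ c) = w := by
  induction w generalizing cur gs with
  | nil => simp [interleave]
  | cons x w ih =>
    obtain _ | ⟨g, gs⟩ := gs
    · simp at hlen
    have hx : x ≠ c := fun h => hw (h ▸ mem_cons_self ..)
    rw [interleave, filter_append, filter_cons_of_pos (by simpa using hx),
      ih (fun h => hw (mem_cons_of_mem _ h)) (by simpa using hlen)]
    simp

theorem gaps_interleave {cur t : ℕ} {w gs : List ℕ} (h : GapData cur t w gs) (hw : c ∉ w) :
    gaps c cur (interleave c cur t w gs) = gs := by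
  induction w generalizing cur gs with
  | nil =>
    rw [h.eq_nil]
    simpa [interleave, gaps] using gaps_replicate_append c (t - cur) cur []
  | cons x w ih =>
    obtain _ | ⟨g, gs⟩ := gs
    · simpa using h.length_eq
    have hx : x ≠ c := fun h => hw (h ▸ mem_cons_self ..)
    rw [interleave, gaps_replicate_append, Nat.add_sub_cancel' (h.bounds g (mem_cons_self ..)).1,
      gaps, if_neg hx, ih h.tail (fun h => hw (mem_cons_of_mem _ h))]

theorem count_interleave {t : ℕ} {w gs : List ℕ} (h : GapData 0 t w gs) (hw : c ∉ w) :
    (interleave c 0 t w gs).count c = t := by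
  rw [(interleave_perm h t.zero_le).count_eq, count_append, count_replicate_self,
    count_eq_zero_of_not_mem hw, Nat.sub_zero, Nat.add_zero]

end Gaps

def RestrictedGrowth (c : ℕ) : ℕ → List ℕ → Prop
  | _, [] => True
  | M, x :: l => c < x ∧ x ≤ M + 1 ∧ RestrictedGrowth c (max M x) l

namespace RestrictedGrowth

variable {c : ℕ}

theorem lt_of_mem : ∀ {M : ℕ} {l : List ℕ}, RestrictedGrowth c M l → ∀ x ∈ l, c < x
  | _, [], _ => by simp
  | _, _ :: _, ⟨hx, _, hl⟩ => by
    rintro y (_ | ⟨_, hy⟩)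
    exacts [hx, hl.lt_of_mem y hy]

theorem replicate_append {M : ℕ} (hM : c + 1 ≤ M) (n : ℕ) {l : List ℕ}
    (hl : RestrictedGrowth c M l) : RestrictedGrowth c M (replicate n (c + 1) ++ l) := by
  induction n with
  | zero => exact hl
  | succ n ih =>
    rw [replicate_succ, cons_append, RestrictedGrowth, max_eq_left hM]
    exact ⟨by omega, by omega, ih⟩

theorem filter : ∀ {M : ℕ} {l : List ℕ}, RestrictedGrowth c M l → c + 1 ≤ M →
    RestrictedGrowth (c + 1) M (l.filter (· ≠ c + 1))
  | _, [], _, _ => trivial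
  | M, x :: l, ⟨hx, hxM, hl⟩, hM => by
    by_cases hxc : x = c + 1
    · rw [filter_cons_of_neg (by simpa using hxc)]
      rw [hxc, max_eq_left hM] at hl
      exact hl.filter hM
    · rw [filter_cons_of_pos (by simpa using hxc)]
      exact ⟨by omega, hxM, hl.filter (by omega)⟩

theorem interleave : ∀ {M cur t : ℕ} {w gs : List ℕ},
    RestrictedGrowth (c + 1) M w → c + 1 ≤ M →
    RestrictedGrowth c M (PartitionPattern.interleave (c + 1) cur t w gs)
  | _, _, _, [], _, _, hM | _, _, _, _ :: _, [], _, hM => by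
    simpa [PartitionPattern.interleave] using replicate_append hM _ (l := []) trivial
  | M, _, _, x :: w, g :: gs, ⟨hx, hxM, hw⟩, hM =>
    replicate_append hM _ ⟨by omega, hxM, hw.interleave (by omega)⟩

theorem exists_interleave {x : ℕ} {xs : List ℕ} (h : RestrictedGrowth c c (x :: xs)) :
    ∃ t w gs, x :: xs = PartitionPattern.interleave (c + 1) 0 t w gs ∧ 1 ≤ t ∧
      GapData 1 t w gs ∧ RestrictedGrowth (c + 1) (c + 1) w ∧ w.length < (x :: xs).length := by
  obtain ⟨hcx, hxc, hxs⟩ := h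
  obtain rfl : x = c + 1 := by omega
  refine ⟨_, _, _, ?_, by simp, gapData_gaps_cons (c + 1) xs, by simpa using hxs.filter,
    length_filter_lt_length_iff_exists.2 ⟨c + 1, mem_cons_self .., by simp⟩⟩
  simpa only [Nat.zero_add] using (interleave_gaps (c + 1) ((c + 1) :: xs) 0).symm

end RestrictedGrowth

theorem restrictedGrowth_interleave {c t : ℕ} {w gs : List ℕ}
    (hw : RestrictedGrowth (c + 1) (c + 1) w) (h : GapData 1 t w gs) (ht : 1 ≤ t) :
    RestrictedGrowth c c (interleave (c + 1) 0 t w gs) := by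
  rw [interleave_eq_cons _ _ _ _ _ (fun g hg => (h.bounds g hg).1) ht]
  exact ⟨by omega, le_rfl, by simpa using hw.interleave le_rfl⟩

theorem foldr_max_max (l : List ℕ) (a b : ℕ) :
    l.foldr max (max a b) = max a (l.foldr max b) := by
  induction l with
  | nil => rfl
  | cons x l ih => simp only [foldr_cons, ih, max_left_comm]

theorem restrictedGrowth_iff : ∀ (l : List ℕ) (c M : ℕ),
    RestrictedGrowth c M l ↔
      ∀ i (h : i < l.length), c < l[i] ∧ l[i] ≤ (l.take i).foldr max M + 1
  | [], _, _ => by simp [RestrictedGrowth]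
  | x :: l, c, M => by
    have hfold : ∀ i, (l.take i).foldr max (max M x) = max x ((l.take i).foldr max M) :=
      fun i => by rw [max_comm M x, foldr_max_max]
    rw [RestrictedGrowth, restrictedGrowth_iff l c (max M x)]
    constructor
    · rintro ⟨hx, hxM, hl⟩ (_ | i) hi
      · simpa using ⟨hx, hxM⟩
      · have := hl i (by simpa using hi)
        simp only [getElem_cons_succ, take_succ_cons, foldr_cons, hfold] at this ⊢
        omega
    · intro h
      refine ⟨(h 0 (by simp)).1, (h 0 (by simp)).2, fun i hi => ?_⟩
      have := h (i + 1) (by simpa using hi)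
      simp only [getElem_cons_succ, take_succ_cons, foldr_cons, hfold] at this ⊢
      omega

theorem isCanonicalSeq_iff (l : List ℕ) : IsCanonicalSeq l ↔ RestrictedGrowth 0 0 l := by
  rw [restrictedGrowth_iff]
  rfl

def pattern (m k a b : ℕ) : List ℕ := replicate k a ++ b :: replicate (m - k) a

def Occurs (m k : ℕ) (π : List ℕ) : Prop := ∃ a b, a < b ∧ pattern m k a b <+ π

theorem length_pattern (m k a b : ℕ) : (pattern m k a b).length = k + 1 + (m - k) := by
  simp only [pattern, length_append, length_replicate, length_cons]
  omega

theorem getElem_pattern {m k a b i : ℕ} (h : i < (pattern m k a b).length) :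
    (pattern m k a b)[i] = if i = k then b else a := by
  simp only [pattern, getElem_append, length_replicate, getElem_replicate]
  split_ifs with h₁ h₂ h₂
  · omega
  · rfl
  · subst h₂; simp
  · rw [getElem_cons, dif_neg (by omega), getElem_replicate]

theorem containsPat_of_occurs {m k : ℕ} {π : List ℕ} (h : Occurs m k π) :
    ContainsPat π (pattern m k 1 2) := by
  obtain ⟨a, b, hab, hsub⟩ := h
  obtain ⟨f, hf⟩ := sublist_iff_exists_fin_orderEmbedding_get_eq.1 hsub
  have hlen : (pattern m k 1 2).length = (pattern m k a b).length := by simp [length_pattern]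
  refine ⟨fun i => f (i.cast hlen), fun i j hij => f.strictMono hij, fun i j => ?_⟩
  simp only [← hf, get_eq_getElem, getElem_pattern, Fin.val_cast]
  split_ifs <;> omega

theorem occurs_of_containsPat {m k : ℕ} (hk : 0 < k) (hkm : k ≤ m) {π : List ℕ}
    (h : ContainsPat π (pattern m k 1 2)) : Occurs m k π := by
  obtain ⟨f, hmono, hiff⟩ := h
  have hlen : (pattern m k 1 2).length = m + 1 := by rw [length_pattern]; omega
  let i₀ : Fin (pattern m k 1 2).length := ⟨0, by omega⟩
  let iₖ : Fin (pattern m k 1 2).length := ⟨k, by omega⟩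
  have hσ : ∀ i : Fin (pattern m k 1 2).length,
      (pattern m k 1 2).get i = if (i : ℕ) = k then 2 else 1 := fun i => getElem_pattern i.2
  have hvals : ∀ i, π.get (f i) =
      if (i : ℕ) = k then π.get (f iₖ) else π.get (f i₀) := by
    intro i
    split_ifs with hi
    · rw [show i = iₖ from Fin.ext hi]
    · have h₁ := (hiff i i₀).not
      have h₂ := (hiff i₀ i).not
      simp only [hσ, hi, i₀, if_neg hk.ne, lt_irrefl, if_false, not_false_eq_true,
        true_iff, not_lt] at h₁ h₂
      exact le_antisymm h₂ h₁
  have hab : π.get (f i₀) < π.get (f iₖ) := by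
    rw [← hiff, hσ, hσ]
    simp [i₀, iₖ, hk.ne]
  refine ⟨_, _, hab, sublist_iff_exists_fin_orderEmbedding_get_eq.2 ?_⟩
  have hlen' : (pattern m k (π.get (f i₀)) (π.get (f iₖ))).length =
      (pattern m k 1 2).length := by
    simp [length_pattern]
  refine ⟨OrderEmbedding.ofStrictMono (fun i => f (i.cast hlen')) fun i j hij => hmono hij,
    fun i => ?_⟩
  show _ = π.get (f (i.cast hlen'))
  rw [get_eq_getElem, getElem_pattern]
  exact (hvals (i.cast hlen')).symm

theorem avoidsPat_iff {m k : ℕ} (hk : 0 < k) (hkm : k ≤ m) (π : List ℕ) :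
    AvoidsPat π (pattern m k 1 2) ↔ ¬ Occurs m k π :=
  not_congr ⟨occurs_of_containsPat hk hkm, containsPat_of_occurs⟩

theorem occurs_iff {m k c : ℕ} (hk : 0 < k) {L : List ℕ} (hL : ∀ x ∈ L, c ≤ x) :
    Occurs m k L ↔ Occurs m k (L.filter (· ≠ c)) ∨
      ∃ g ∈ gaps c 0 L, k ≤ g ∧ m - k ≤ L.count c - g := by
  constructor
  · rintro ⟨a, b, hab, hsub⟩
    have hca : c ≤ a := hL a (hsub.subset (by simp [pattern, hk.ne']))
    by_cases hac : a = c
    · subst hac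
      right
      obtain ⟨u, v, rfl, hu, hv⟩ := append_sublist_iff.1 hsub
      obtain ⟨r, r', rfl, hbr, hr'⟩ := cons_sublist_iff.1 hv
      obtain ⟨p, q, rfl⟩ := append_of_mem hbr
      have hbc : b ≠ a := hab.ne'
      refine ⟨(u ++ p).count a,
        (mem_gaps_iff a _ 0 _).2 ⟨u ++ p, b, q ++ r', by simp, hbc, by simp⟩, ?_, ?_⟩
      · have := replicate_sublist_iff.1 hu
        simp only [count_append]
        omega
      · have := replicate_sublist_iff.1 hr'
        simp only [count_append, count_cons_of_ne hbc]
        omega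
    · left
      refine ⟨a, b, hab, ?_⟩
      have hpat : (pattern m k a b).filter (· ≠ c) = pattern m k a b := by
        refine filter_eq_self.2 fun y hy => ?_
        simp only [pattern, mem_append, mem_cons, mem_replicate] at hy
        simp only [ne_eq, decide_eq_true_eq]
        omega
      exact hpat ▸ hsub.filter _
  · rintro (⟨a, b, hab, hsub⟩ | ⟨g, hg, hkg, hmg⟩)
    · exact ⟨a, b, hab, hsub.trans filter_sublist⟩
    · obtain ⟨U, b, V, rfl, hbc, rfl⟩ := (mem_gaps_iff c L 0 g).1 hg
      refine ⟨c, b, lt_of_le_of_ne (hL b (by simp)) hbc.symm,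
        (replicate_sublist_iff.2 (by omega)).append
          (cons_sublist_cons.2 (replicate_sublist_iff.2 ?_))⟩
      simp only [count_append, count_cons_of_ne hbc] at hmg
      omega

def GapAllowed (m k t g : ℕ) : Prop := 1 ≤ g ∧ g ≤ t ∧ ¬(k ≤ g ∧ m - k ≤ t - g)

/-- For `t ≥ m` the allowed gaps are `[1, k - 1] ∪ [t - m + k + 1, t]`, `m - 1` of them whatever
`k` is, and this is the increasing bijection onto those for `k'`; for `t < m` all are allowed. -/
def relabelGap (m k k' t g : ℕ) : ℕ :=
  if t < m then g
  else if g < k then (if g < k' then g else g + (t + 1 - m))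
  else (if g - (t + 1 - m) < k' then g - (t + 1 - m) else g)

theorem GapAllowed.relabelGap {m k k' t g : ℕ} (hk : 0 < k) (hkm : k ≤ m)
    (h : GapAllowed m k t g) : GapAllowed m k' t (relabelGap m k k' t g) := by
  obtain ⟨_, _, _⟩ := h
  unfold PartitionPattern.relabelGap GapAllowed
  split_ifs <;> omega

theorem relabelGap_le_relabelGap {m k k' t g h : ℕ} (hg : GapAllowed m k t g)
    (hh : GapAllowed m k t h) (hgh : g ≤ h) :
    relabelGap m k k' t g ≤ relabelGap m k k' t h := by
  obtain ⟨_, _, _⟩ := hg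
  obtain ⟨_, _, _⟩ := hh
  unfold relabelGap
  split_ifs <;> omega

theorem relabelGap_relabelGap {m k k' t g : ℕ} (h : GapAllowed m k t g) :
    relabelGap m k' k t (relabelGap m k k' t g) = g := by
  obtain ⟨_, _, _⟩ := h
  unfold relabelGap
  split_ifs <;> omega

theorem gapData_map_relabelGap {m k k' t : ℕ} {w gs : List ℕ} (hs : gs.Pairwise (· ≤ ·))
    (hall : ∀ g ∈ gs, GapAllowed m k t g) (hk : 0 < k) (hkm : k ≤ m)
    (hlen : gs.length = w.length) :
    GapData 1 t w (gs.map (relabelGap m k k' t)) where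
  pairwise := pairwise_map.2 <| hs.imp_of_mem fun ha hb hab =>
    relabelGap_le_relabelGap (hall _ ha) (hall _ hb) hab
  bounds g hg := by
    obtain ⟨g₀, hg₀, rfl⟩ := mem_map.1 hg
    obtain ⟨h₁, h₂, -⟩ := (hall g₀ hg₀).relabelGap (k' := k') hk hkm
    exact ⟨h₁, h₂⟩
  length_eq := by rw [length_map, hlen]

theorem not_occurs_interleave_iff {m k c t : ℕ} (hk : 0 < k) {w gs : List ℕ}
    (h : GapData 1 t w gs) (hw : ∀ x ∈ w, c < x) :
    ¬ Occurs m k (interleave c 0 t w gs) ↔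
      ¬ Occurs m k w ∧ ∀ g ∈ gs, GapAllowed m k t g := by
  have h₀ := h.of_le zero_le_one
  have hcw : c ∉ w := fun hc => (hw c hc).false
  have hle : ∀ x ∈ interleave c 0 t w gs, c ≤ x := fun x hx => by
    rcases mem_append.1 ((interleave_perm h₀ t.zero_le).subset hx) with hx | hx
    · exact (eq_of_mem_replicate hx).ge
    · exact (hw x hx).le
  rw [occurs_iff hk hle, filter_interleave hcw h.length_eq, gaps_interleave h₀ hcw,
    count_interleave h₀ hcw]
  simp only [not_or, not_exists, not_and, GapAllowed]
  exact and_congr_right fun _ => forall₂_congr fun g hg => by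
    simp only [h.bounds g hg, true_and]

/-- On a restricted growth sequence the head `x` is the least letter. -/
def rearrange (m k k' : ℕ) : List ℕ → List ℕ
  | [] => []
  | x :: xs =>
    interleave x 0 ((x :: xs).count x) (rearrange m k k' ((x :: xs).filter (· ≠ x)))
      ((gaps x 0 (x :: xs)).map (relabelGap m k k' ((x :: xs).count x)))
termination_by l => l.length
decreasing_by exact length_filter_lt_length_iff_exists.2 ⟨x, mem_cons_self .., by simp⟩

theorem rearrange_interleave {m k k' c t : ℕ} {w gs : List ℕ} (h : GapData 1 t w gs)
    (ht : 1 ≤ t) (hw : c ∉ w) :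
    rearrange m k k' (interleave c 0 t w gs) =
      interleave c 0 t (rearrange m k k' w) (gs.map (relabelGap m k k' t)) := by
  have h₀ := h.of_le zero_le_one
  have hcount := count_interleave h₀ hw
  have hfilter := filter_interleave (cur := 0) (t := t) hw h.length_eq
  have hgaps := gaps_interleave h₀ hw
  rw [interleave_eq_cons c w gs 0 t (fun g hg => (h.bounds g hg).1) ht] at hcount hfilter hgaps ⊢
  rw [rearrange, hcount, hfilter, hgaps]

theorem rearrange_spec {m k k' : ℕ} (hk : 0 < k) (hkm : k ≤ m) (hk' : 0 < k') :
    ∀ {c : ℕ} (π : List ℕ), RestrictedGrowth c c π → ¬ Occurs m k π →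
      RestrictedGrowth c c (rearrange m k k' π) ∧ ¬ Occurs m k' (rearrange m k k' π) ∧
      rearrange m k k' π ~ π ∧ rearrange m k' k (rearrange m k k' π) = π
  | _, [], _, _ => ⟨by simp [rearrange, RestrictedGrowth],
      fun ⟨_, _, _, h⟩ => by simp [rearrange, pattern] at h,
      by simp [rearrange], by simp [rearrange]⟩
  | c, x :: xs, hπ, hocc => by
    obtain ⟨t, w, gs, hπ_eq, ht, hdata, hw, hlt⟩ := hπ.exists_interleave
    rw [hπ_eq] at hocc ⊢
    obtain ⟨hwocc, hall⟩ := (not_occurs_interleave_iff hk hdata hw.lt_of_mem).1 hocc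
    obtain ⟨hw', hw'occ, hperm, hinv⟩ := rearrange_spec hk hkm hk' w hw hwocc
    have hcw : c + 1 ∉ w := fun h => (hw.lt_of_mem _ h).false
    have hdata' : GapData 1 t (rearrange m k k' w) (gs.map (relabelGap m k k' t)) :=
      gapData_map_relabelGap hdata.pairwise hall hk hkm (hdata.length_eq.trans hperm.length_eq.symm)
    have hall' : ∀ g ∈ gs.map (relabelGap m k k' t), GapAllowed m k' t g := by
      simp only [mem_map]
      rintro _ ⟨g, hg, rfl⟩
      exact (hall g hg).relabelGap hk hkm
    rw [rearrange_interleave hdata ht hcw]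
    refine ⟨restrictedGrowth_interleave hw' hdata' ht,
      (not_occurs_interleave_iff hk' hdata' hw'.lt_of_mem).2 ⟨hw'occ, hall'⟩, ?_, ?_⟩
    · calc _ ~ replicate (t - 0) (c + 1) ++ rearrange m k k' w :=
            interleave_perm (hdata'.of_le zero_le_one) t.zero_le
        _ ~ replicate (t - 0) (c + 1) ++ w := hperm.append_left _
        _ ~ interleave (c + 1) 0 t w gs :=
            (interleave_perm (hdata.of_le zero_le_one) t.zero_le).symm
    · rw [rearrange_interleave hdata' ht fun h => hcw (hperm.subset h), hinv, map_map]
      congr 1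
      exact (map_congr_left fun g hg => relabelGap_relabelGap (k' := k') (hall g hg)).trans
        (map_id gs)
termination_by _ π => π.length
decreasing_by exact hlt

def avoiders (m k n : ℕ) : Set (List ℕ) :=
  {π | π.length = n ∧ IsCanonicalSeq π ∧ AvoidsPat π (pattern m k 1 2)}

theorem rearrange_avoiders {m k k' n : ℕ} (hk : 0 < k) (hkm : k ≤ m) (hk' : 0 < k')
    (hk'm : k' ≤ m) {π : List ℕ} (hπ : π ∈ avoiders m k n) :
    rearrange m k k' π ∈ avoiders m k' n ∧ rearrange m k' k (rearrange m k k' π) = π ∧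
      rearrange m k k' π ~ π := by
  obtain ⟨hlen, hcanon, havoid⟩ := hπ
  rw [isCanonicalSeq_iff] at hcanon
  rw [avoidsPat_iff hk hkm] at havoid
  obtain ⟨hcanon', havoid', hperm, hinv⟩ := rearrange_spec hk hkm hk' π hcanon havoid
  exact ⟨⟨hperm.length_eq.trans hlen, (isCanonicalSeq_iff _).2 hcanon',
    (avoidsPat_iff hk' hk'm _).2 havoid'⟩, hinv, hperm⟩

def avoidersEquiv {m k k' : ℕ} (hk : 0 < k) (hkm : k ≤ m) (hk' : 0 < k') (hk'm : k' ≤ m)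
    (n : ℕ) :
    avoiders m k n ≃ avoiders m k' n where
  toFun π := ⟨rearrange m k k' π, (rearrange_avoiders hk hkm hk' hk'm π.2).1⟩
  invFun π := ⟨rearrange m k' k π, (rearrange_avoiders hk' hk'm hk hkm π.2).1⟩
  left_inv π := Subtype.ext (rearrange_avoiders hk hkm hk' hk'm π.2).2.1
  right_inv π := Subtype.ext (rearrange_avoiders hk' hk'm hk hkm π.2).2.1

theorem count_avoidersEquiv {m k k' n : ℕ} (hk : 0 < k) (hkm : k ≤ m) (hk' : 0 < k')
    (hk'm : k' ≤ m) (π : avoiders m k n) (j : ℕ) :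
    (avoidersEquiv hk hkm hk' hk'm n π).val.count j = π.val.count j :=
  (rearrange_avoiders hk hkm hk' hk'm π.2).2.2.count_eq j

end PartitionPattern

theorem statement7_general (m : ℕ) :
    (∀ j k : ℕ, 1 ≤ j → j ≤ m → 1 ≤ k → k ≤ m →
      PatEquiv (List.replicate j 1 ++ 2 :: List.replicate (m - j) 1)
               (List.replicate k 1 ++ 2 :: List.replicate (m - k) 1)) ∧
    (∀ n k : ℕ, 1 ≤ k → k ≤ m →
      ∃ F : {π : List ℕ // π.length = n ∧ IsCanonicalSeq π ∧
               AvoidsPat π (List.replicate k 1 ++ 2 :: List.replicate (m - k) 1)} ≃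
            {π : List ℕ // π.length = n ∧ IsCanonicalSeq π ∧
               AvoidsPat π (List.replicate m 1 ++ [2])},
        ∀ π, ∀ j : ℕ, (F π).val.count j = π.val.count j) := by
  refine ⟨fun j k hj hjm hk hkm n => ?_, fun n k hk hkm => ?_⟩
  · rw [pAvoid, pAvoid, ← Nat.card_coe_set_eq, ← Nat.card_coe_set_eq]
    exact Nat.card_congr (PartitionPattern.avoidersEquiv hj hjm hk hkm n)
  · have hm : List.replicate m 1 ++ [2] = PartitionPattern.pattern m m 1 2 := by
      simp [PartitionPattern.pattern]
    rw [hm]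
    exact ⟨PartitionPattern.avoidersEquiv hk hkm (hk.trans hkm) le_rfl n,
      PartitionPattern.count_avoidersEquiv _ _ _ _⟩

/-- For m ≥ 1 and 1 ≤ j, k ≤ m, the patterns 1^j21^(m−j) and
1^k21^(m−k) are equivalent; moreover for every n and every 1 ≤ k ≤ m
there is a bijection between P(n; 1^k21^(m−k)) and P(n; 1^m 2) preserving
the number of blocks and the size of each block (i.e. the count of every
symbol, which determines both). -/
theorem statement7 (m : ℕ) (hm : 1 ≤ m) :
    (∀ j k : ℕ, 1 ≤ j → j ≤ m → 1 ≤ k → k ≤ m →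
      PatEquiv (List.replicate j 1 ++ 2 :: List.replicate (m - j) 1)
               (List.replicate k 1 ++ 2 :: List.replicate (m - k) 1)) ∧
    (∀ n k : ℕ, 1 ≤ k → k ≤ m →
      ∃ F : {π : List ℕ // π.length = n ∧ IsCanonicalSeq π ∧
               AvoidsPat π (List.replicate k 1 ++ 2 :: List.replicate (m - k) 1)} ≃
            {π : List ℕ // π.length = n ∧ IsCanonicalSeq π ∧
               AvoidsPat π (List.replicate m 1 ++ [2])},
        ∀ π, ∀ j : ℕ, (F π).val.count j = π.val.count j) :=
  statement7_general m
end

section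
/- Let π be the canonical sequence of a partition with exactly p occurrences of the symbol 1, written uniquely as π = 1P₁1P₂⋯1P_{p−1}1P_p where each chunk Pᵢ is a (possibly empty) maximal contiguous subsequence of π containing no symbol 1, and let π⁻ be the sequence obtained by concatenating P₁P₂⋯P_p and subtracting 1 from every symbol. Then for any integers r ≥ 1 and s ≥ 0, π avoids the pattern 1ʳ21ˢ if and only if both of the following hold: (i) π⁻ avoids 1ʳ21ˢ, and (ii) the chunk Pᵢ is empty for every i with r ≤ i ≤ p−s. -/
/-!
An occurrence of `1ʳ21ˢ` in a sequence is a subsequence `aʳ b aˢ` with `a < b`. Write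
`π = 1 P₁ 1 P₂ ⋯ 1 P_p`. If `a ≥ 2`, the occurrence avoids the symbol `1`, so it lies in
`P₁ ⋯ P_p` and shifts down to an occurrence in `π⁻`; every occurrence in `π⁻` shifts back
up. If `a = 1`, the peak `b` lies in some chunk `Pᵢ`, and there are `r` ones before it and
`s` ones after it exactly when `r ≤ i ≤ p − s`.
-/

open List

theorem List.Sublist.of_cons_append_of_not_mem {α : Type*} {a : α} {l Q L : List α}
    (h : a :: l <+ Q ++ L) (ha : a ∉ Q) : a :: l <+ L := by
  obtain ⟨_ | ⟨x, l₁⟩, l₂, hl, hl₁, hl₂⟩ := sublist_append_iff.1 h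
  · simpa [hl] using hl₂
  · obtain ⟨rfl, -⟩ := cons_eq_cons.1 hl
    exact absurd (hl₁.subset mem_cons_self) ha

def bump {α : Type*} (r s : ℕ) (a b : α) : List α := replicate r a ++ b :: replicate s a

section Bump

variable {α : Type*} (r s : ℕ) (a b : α)

@[simp]
theorem length_bump : (bump r s a b).length = r + s + 1 := by
  simp [bump]; omega

theorem bump_succ : bump (r + 1) s a b = a :: bump r s a b := by
  simp [bump, replicate_succ]

theorem getElem_bump {i : ℕ} (h : i < (bump r s a b).length) :
    (bump r s a b)[i] = if i = r then b else a := by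
  rcases lt_trichotomy i r with hi | rfl | hi
  · simp [bump, getElem_append_left, hi, hi.ne]
  · simp [bump]
  · obtain ⟨k, rfl⟩ := Nat.exists_eq_add_of_lt hi
    rw [if_neg (by omega)]
    simp [bump, getElem_append_right, Nat.add_assoc]

theorem map_bump {β : Type*} (f : α → β) : (bump r s a b).map f = bump r s (f a) (f b) := by
  simp [bump, map_replicate]

end Bump

theorem containsPat_iff_exists_sublist_s8 {π σ : List ℕ} :
    ContainsPat π σ ↔ ∃ τ, τ <+ π ∧ ∃ h : σ.length = τ.length,
      ∀ i j : Fin σ.length, σ.get i < σ.get j ↔ τ.get (i.cast h) < τ.get (j.cast h) := by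
  constructor
  · rintro ⟨f, hf, hiso⟩
    refine ⟨ofFn (π.get ∘ f), ?_, length_ofFn.symm, by simpa using hiso⟩
    rw [sublist_iff_exists_fin_orderEmbedding_get_eq]
    exact ⟨(Fin.castOrderIso length_ofFn).toOrderEmbedding.trans
      (OrderEmbedding.ofStrictMono f hf), fun _ => by simp; rfl⟩
  · rintro ⟨τ, hτ, h, hiso⟩
    obtain ⟨g, hg⟩ := sublist_iff_exists_fin_orderEmbedding_get_eq.mp hτ
    exact ⟨fun i => g (i.cast h), g.strictMono.comp (Fin.castOrderIso h).strictMono,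
      by simpa only [hg] using hiso⟩

theorem containsPat_bump_iff {π : List ℕ} {r s : ℕ} (hr : 0 < r) :
    ContainsPat π (bump r s 1 2) ↔ ∃ a b, a < b ∧ bump r s a b <+ π := by
  rw [containsPat_iff_exists_sublist_s8]
  constructor
  · rintro ⟨τ, hτ, hlen, hiso⟩
    have hτlen : τ.length = r + s + 1 := by simpa using hlen.symm
    have hiso' : ∀ i j (hi : i < τ.length) (hj : j < τ.length),
        ((if i = r then 2 else 1) < (if j = r then 2 else 1) ↔ τ[i] < τ[j]) :=
      fun i j hi hj => by simpa [getElem_bump] using hiso ⟨i, by omega⟩ ⟨j, by omega⟩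
    refine ⟨τ[0], τ[r], by simpa [hr.ne] using hiso' 0 r (by omega) (by omega), ?_⟩
    convert hτ using 1
    refine ext_getElem (by simp [hτlen]) fun i hi _ => ?_
    rw [getElem_bump]
    split_ifs with hir
    · simp only [hir]
    · have h₁ := hiso' i 0 (by omega) (by omega)
      have h₂ := hiso' 0 i (by omega) (by omega)
      simp only [hir, hr.ne, if_false, lt_self_iff_false, false_iff, not_lt] at h₁ h₂
      exact le_antisymm h₁ h₂
  · rintro ⟨a, b, hab, hsub⟩
    refine ⟨_, hsub, by simp, fun i j => ?_⟩
    simp only [List.get_eq_getElem, getElem_bump, Fin.val_cast]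
    split_ifs <;> omega

def glue {α : Type*} (c : α) (P : List (List α)) : List α := (P.map (c :: ·)).flatten

section Glue

variable {α : Type*} (c : α) (P : List (List α))

@[simp]
theorem glue_nil : glue c [] = [] := rfl

@[simp]
theorem glue_cons (Q : List α) : glue c (Q :: P) = c :: (Q ++ glue c P) := by
  simp [glue]

theorem glue_append (P' : List (List α)) : glue c (P ++ P') = glue c P ++ glue c P' := by
  simp [glue]

theorem flatten_sublist_glue : P.flatten <+ glue c P := by
  induction P with
  | nil => simp
  | cons Q P ih => exact ((Sublist.refl Q).append ih).cons c

theorem filter_glue {p : α → Bool} (hc : p c = false) :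
    (glue c P).filter p = P.flatten.filter p := by
  induction P with
  | nil => simp
  | cons Q P ih => simp [hc, filter_append, ih]

variable [DecidableEq α]

theorem count_glue : count c (glue c P) = P.length + count c P.flatten := by
  induction P with
  | nil => simp
  | cons Q P ih => simp [count_append, ih]; omega

variable {c P}

theorem List.Sublist.of_sublist_glue {l : List α} (h : l <+ glue c P) (hc : c ∉ l) :
    l <+ P.flatten := by
  calc l = l.filter (· ≠ c) :=
        (filter_eq_self.2 fun x hx => decide_eq_true (ne_of_mem_of_not_mem hx hc)).symm
    _ <+ (glue c P).filter (· ≠ c) := h.filter _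
    _ = P.flatten.filter (· ≠ c) := filter_glue c P (by simp)
    _ <+ P.flatten := filter_sublist

variable {b : α} {r s : ℕ}

theorem exists_chunk_of_bump_sublist_glue (hb : b ≠ c) (hP : c ∉ P.flatten)
    (h : bump r s c b <+ glue c P) :
    ∃ i, ∃ hi : i < P.length, P[i] ≠ [] ∧ r ≤ i + 1 ∧ i + 1 + s ≤ P.length := by
  induction P generalizing r with
  | nil => simpa using congrArg length (sublist_nil.1 h)
  | cons Q P ih =>
    simp only [flatten_cons, mem_append, not_or] at hP
    obtain ⟨hQ, hP⟩ := hP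
    have later : ∀ r', bump r' s c b <+ glue c P → r ≤ r' + 1 →
        ∃ i, ∃ hi : i < (Q :: P).length, (Q :: P)[i] ≠ [] ∧ r ≤ i + 1 ∧
          i + 1 + s ≤ (Q :: P).length := fun r' h' hr' => by
      obtain ⟨i, hi, hne, hri, his⟩ := ih hP h'
      exact ⟨i + 1, by simpa using hi, by simpa using hne, by omega, by simp; omega⟩
    have peak : b :: replicate s c <+ Q ++ glue c P → r ≤ 1 →
        ∃ i, ∃ hi : i < (Q :: P).length, (Q :: P)[i] ≠ [] ∧ r ≤ i + 1 ∧
          i + 1 + s ≤ (Q :: P).length := fun h' hr => by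
      by_cases hbQ : b ∈ Q
      · have hs : s ≤ count c (Q ++ glue c P) :=
          replicate_sublist_iff.1 ((sublist_cons_self _ _).trans h')
        simp only [count_append, count_glue, count_eq_zero.2 hQ, count_eq_zero.2 hP] at hs
        exact ⟨0, by simp, by simpa using ne_nil_of_mem hbQ, hr, by simp; omega⟩
      · exact later 0 (h'.of_cons_append_of_not_mem hbQ) (by omega)
    rw [glue_cons] at h
    rcases r with _ | r
    · have h₀ : b :: replicate s c <+ [c] ++ (Q ++ glue c P) := h
      exact peak (h₀.of_cons_append_of_not_mem (by simpa using hb)) (Nat.zero_le 1)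
    rw [bump_succ, cons_sublist_cons] at h
    rcases r with _ | r
    · exact peak h le_rfl
    · rw [bump_succ] at h
      exact later (r + 1) (bump_succ r s c b ▸ h.of_cons_append_of_not_mem hQ) le_rfl

theorem bump_sublist_glue_of_mem_chunk {i : ℕ} (hi : i < P.length) (hb : b ∈ P[i])
    (hri : r ≤ i + 1) (his : i + 1 + s ≤ P.length) : bump r s c b <+ glue c P := by
  have hsplit :
      glue c P = (glue c (P.take i) ++ [c]) ++ (P[i] ++ glue c (P.drop (i + 1))) := by
    conv_lhs => rw [← take_append_drop i P, ← getElem_cons_drop hi]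
    rw [glue_append, glue_cons, append_assoc, singleton_append]
  rw [hsplit, bump, ← singleton_append]
  refine Sublist.append ?_ ((singleton_sublist.2 hb).append ?_)
  · rw [replicate_sublist_iff, count_append, count_glue, length_take]
    simp
    omega
  · rw [replicate_sublist_iff, count_glue, length_drop]
    omega

end Glue

theorem IsCanonicalSeq.one_le {π : List ℕ} (hπ : IsCanonicalSeq π) {x : ℕ} (hx : x ∈ π) :
    1 ≤ x := by
  obtain ⟨i, rfl⟩ := mem_iff_get.1 hx
  exact (hπ i i.2).1

theorem bump_succ_sublist_of_bump_sublist_map_pred {L : List ℕ} (hL : ∀ x ∈ L, 1 ≤ x)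
    {r s a b : ℕ} (h : bump r s a b <+ L.map (· - 1)) : bump r s (a + 1) (b + 1) <+ L := by
  obtain ⟨l, hl, hbump⟩ := sublist_map_iff.1 h
  have hl' : l.map ((· + 1) ∘ (· - 1)) = l :=
    map_congr_left (fun x hx => Nat.sub_add_cancel (hL x (hl.subset hx))) |>.trans (map_id l)
  rwa [← map_bump (f := (· + 1)), hbump, map_map, hl']

theorem exists_bump_sublist_glue_one_iff {P : List (List ℕ)} (hpos : ∀ x ∈ glue 1 P, 1 ≤ x)
    (hP : 1 ∉ P.flatten) {r s : ℕ} (hr : 0 < r) :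
    (∃ a b, a < b ∧ bump r s a b <+ glue 1 P) ↔
      (∃ a b, a < b ∧ bump r s a b <+ P.flatten.map (· - 1)) ∨
        ∃ i, ∃ hi : i < P.length, P[i] ≠ [] ∧ r ≤ i + 1 ∧ i + 1 + s ≤ P.length := by
  have hpos' : ∀ x ∈ P.flatten, 1 ≤ x :=
    fun x hx => hpos x ((flatten_sublist_glue 1 P).subset hx)
  constructor
  · rintro ⟨a, b, hab, hsub⟩
    rcases (hpos a (hsub.subset (by simp [bump]; omega))).eq_or_lt with rfl | ha
    · exact .inr (exists_chunk_of_bump_sublist_glue (by omega) hP hsub)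
    · refine .inl ⟨a - 1, b - 1, by omega, ?_⟩
      simpa [map_bump] using (hsub.of_sublist_glue (by simp [bump]; omega)).map (· - 1)
  · rintro (⟨a, b, hab, hsub⟩ | ⟨i, hi, hne, hri, his⟩)
    · exact ⟨a + 1, b + 1, by omega,
        (bump_succ_sublist_of_bump_sublist_map_pred hpos' hsub).trans (flatten_sublist_glue 1 P)⟩
    · obtain ⟨b, hb⟩ := exists_mem_of_ne_nil _ hne
      have hbP : b ∈ P.flatten := mem_flatten.2 ⟨_, getElem_mem hi, hb⟩
      exact ⟨1, b, lt_of_le_of_ne (hpos' b hbP) (fun h => hP (h ▸ hbP)),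
        bump_sublist_glue_of_mem_chunk hi hb hri his⟩

/-- Let π be a canonical sequence decomposed as
π = 1P₁1P₂⋯1P_p where the chunks Pᵢ contain no symbol 1 (so p = P.length
is the number of occurrences of 1), and let π⁻ be the concatenation of the
chunks with every symbol decreased by one. Then for r ≥ 1, s ≥ 0: π avoids
1^r 2 1^s iff π⁻ avoids 1^r 2 1^s and every chunk Pᵢ with r ≤ i ≤ p − s is
empty (chunks indexed 1-based; the 0-based chunk at index i is chunk i+1). -/
theorem statement8 (π : List ℕ) (hπ : IsCanonicalSeq π) (P : List (List ℕ))
    (hdec : π = (P.map (fun Q => 1 :: Q)).flatten)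
    (hP : ∀ Q ∈ P, (1 : ℕ) ∉ Q) (r s : ℕ) (hr : 1 ≤ r) :
    AvoidsPat π (List.replicate r 1 ++ 2 :: List.replicate s 1) ↔
      (AvoidsPat (P.flatten.map (· - 1)) (List.replicate r 1 ++ 2 :: List.replicate s 1) ∧
       ∀ i : ℕ, i < P.length → r ≤ i + 1 → i + 1 + s ≤ P.length → P.getD i [] = []) := by
  change π = glue 1 P at hdec
  subst hdec
  change AvoidsPat _ (bump r s 1 2) ↔ AvoidsPat _ (bump r s 1 2) ∧ _
  simp only [AvoidsPat, containsPat_bump_iff hr,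
    exists_bump_sublist_glue_one_iff (fun x => hπ.one_le) (by simpa using hP) hr, not_or]
  refine and_congr_right' ⟨fun h i hi hri his => ?_, fun h ⟨i, hi, hne, hri, his⟩ => ?_⟩
  · rw [getD_eq_getElem _ _ hi]
    exact not_not.1 fun hne => h ⟨i, hi, hne, hri, his⟩
  · exact hne (getD_eq_getElem _ _ hi ▸ h i hi hri his)
end

section
/- For every m ≥ 1, the pattern 12^m (the symbol 1 followed by m copies of 2) is equivalent to the pattern 121^{m−1} (the symbols 1, 2 followed by m−1 copies of 1). -/
/-!
In a canonical sequence every letter `b ≥ 2` is preceded by a `1`, so `π` contains `12^m` iff some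
letter `b ≥ 2` occurs `m` times. Since the first occurrence of a letter `a` precedes every larger
letter, `π` contains `121^r` (`r ≥ 1`) iff some letter occurs `r` times *late*, i.e. after a larger
letter.

Relabel `π` letter by letter: with `M` the maximum of the letters read so far, a letter `M + 1`
(opening a new block) is kept, and the old letters are rotated by `a ↦ a + 1` (`a < M`), `M ↦ 1`.
This is a bijection of canonical sequences, and the occurrences of `b ≥ 2` in the image are the one
opening the block `b` together with the late occurrences of `b - 1` in `π`. Hence the image avoids
`12^(r+1)` exactly when `π` avoids `121^r`.
-/

theorem containsPat_iff_exists_strictMonoOn_map_sublist {π σ : List ℕ} :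
    ContainsPat π σ ↔ ∃ g : ℕ → ℕ, StrictMonoOn g {v | v ∈ σ} ∧ (σ.map g).Sublist π := by
  constructor
  · rintro ⟨f, hf, hiso⟩
    have hfac : (fun i => π.get (f i)).FactorsThrough σ.get := fun i j hij =>
      le_antisymm (not_lt.1 fun h => ((hiso j i).2 h).ne' hij)
        (not_lt.1 fun h => ((hiso i j).2 h).ne hij)
    set g := Function.extend σ.get (fun i => π.get (f i)) id
    have hg : ∀ i, g (σ.get i) = π.get (f i) := hfac.extend_apply id
    refine ⟨g, ?_, ?_⟩
    · rintro v hv w hw hvw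
      obtain ⟨i, rfl⟩ := List.mem_iff_get.1 hv
      obtain ⟨j, rfl⟩ := List.mem_iff_get.1 hw
      rw [hg, hg]
      exact (hiso i j).1 hvw
    · rw [List.sublist_iff_exists_fin_orderEmbedding_get_eq]
      refine ⟨(Fin.castOrderIso (σ.length_map g)).toOrderEmbedding.trans
        (OrderEmbedding.ofStrictMono f hf), fun i => ?_⟩
      simpa using hg (Fin.cast (σ.length_map g) i)
  · rintro ⟨g, hg, hsub⟩
    obtain ⟨e, he⟩ := List.sublist_iff_exists_fin_orderEmbedding_get_eq.1 hsub
    have he' : ∀ i, π.get (e (Fin.cast (σ.length_map g).symm i)) = g (σ.get i) := fun i => by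
      simpa using (he (Fin.cast (σ.length_map g).symm i)).symm
    refine ⟨fun i => e (Fin.cast (σ.length_map g).symm i), e.strictMono.comp fun _ _ h => h,
      fun i j => ?_⟩
    rw [he', he']
    exact (hg.lt_iff_lt (List.get_mem σ i) (List.get_mem σ j)).symm

theorem containsPat_iff_of_forall_mem_eq_one_or_two {π σ : List ℕ} (h₁ : 1 ∈ σ) (h₂ : 2 ∈ σ)
    (hσ : ∀ v ∈ σ, v = 1 ∨ v = 2) :
    ContainsPat π σ ↔
      ∃ x y, x < y ∧ (σ.map fun v => if v = 1 then x else y).Sublist π := by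
  rw [containsPat_iff_exists_strictMonoOn_map_sublist]
  constructor
  · rintro ⟨g, hg, hsub⟩
    refine ⟨g 1, g 2, hg h₁ h₂ one_lt_two, ?_⟩
    convert hsub using 1
    refine List.map_congr_left fun v hv => ?_
    rcases hσ v hv with rfl | rfl <;> simp
  · rintro ⟨x, y, hxy, hsub⟩
    refine ⟨_, fun v hv w hw hvw => ?_, hsub⟩
    rcases hσ v hv with rfl | rfl <;> rcases hσ w hw with rfl | rfl <;> simp_all

theorem containsPat_one_replicate_two_iff_sublist {π : List ℕ} {m : ℕ} (hm : 1 ≤ m) :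
    ContainsPat π (1 :: List.replicate m 2) ↔
      ∃ x y, x < y ∧ (x :: List.replicate m y).Sublist π := by
  rw [containsPat_iff_of_forall_mem_eq_one_or_two (by simp)
    (by simp [List.mem_replicate]; omega) (by simp +contextual [List.mem_replicate])]
  simp [List.map_replicate]

theorem containsPat_one_two_replicate_one_iff_sublist {π : List ℕ} {r : ℕ} :
    ContainsPat π (1 :: 2 :: List.replicate r 1) ↔
      ∃ x y, x < y ∧ (x :: y :: List.replicate r x).Sublist π := by
  rw [containsPat_iff_of_forall_mem_eq_one_or_two (by simp) (by simp)
    (by simp +contextual [List.mem_replicate])]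
  simp [List.map_replicate]

def IsCanonicalFrom : ℕ → List ℕ → Prop
  | _, [] => True
  | M, a :: l => 1 ≤ a ∧ a ≤ M + 1 ∧ IsCanonicalFrom (max M a) l

theorem isCanonicalFrom_iff_forall_getElem {M : ℕ} {π : List ℕ} :
    IsCanonicalFrom M π ↔
      ∀ i (h : i < π.length), 1 ≤ π[i] ∧ π[i] ≤ max M ((π.take i).foldr max 0) + 1 := by
  induction π generalizing M with
  | nil => simp [IsCanonicalFrom]
  | cons a l ih =>
    simp only [IsCanonicalFrom, ih, List.length_cons]
    constructor
    · rintro ⟨h1, h2, hl⟩ (_ | i) hi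
      · simpa using ⟨h1, by omega⟩
      · simpa [Nat.max_assoc] using hl i (by omega)
    · intro h
      have h0 := h 0 (by simp)
      simp only [List.getElem_cons_zero, List.take_zero, List.foldr_nil] at h0
      refine ⟨h0.1, by omega, fun i hi => ?_⟩
      simpa [Nat.max_assoc] using h (i + 1) (Nat.succ_lt_succ hi)

theorem isCanonicalSeq_iff_isCanonicalFrom_zero {π : List ℕ} :
    IsCanonicalSeq π ↔ IsCanonicalFrom 0 π := by
  simp [IsCanonicalSeq, isCanonicalFrom_iff_forall_getElem]

theorem IsCanonicalFrom.one_le_of_mem {M x : ℕ} {π : List ℕ} (hπ : IsCanonicalFrom M π)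
    (hx : x ∈ π) : 1 ≤ x := by
  induction π generalizing M with
  | nil => simp at hx
  | cons a l ih =>
    rcases List.mem_cons.1 hx with rfl | hx
    exacts [hπ.1, ih hπ.2.2 hx]

def mapRunMax (t : ℕ → ℕ → ℕ) : ℕ → List ℕ → List ℕ
  | _, [] => []
  | M, a :: l => t M a :: mapRunMax t (max M a) l

def PreservesNewBlock (t : ℕ → ℕ → ℕ) : Prop :=
  ∀ M a, 1 ≤ a → a ≤ M + 1 → 1 ≤ t M a ∧ t M a ≤ M + 1 ∧ (t M a = M + 1 ↔ a = M + 1)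

section mapRunMax

variable {t u : ℕ → ℕ → ℕ}

@[simp]
theorem length_mapRunMax (M : ℕ) (π : List ℕ) : (mapRunMax t M π).length = π.length := by
  induction π generalizing M <;> simp [mapRunMax, *]

theorem isCanonicalFrom_mapRunMax (ht : PreservesNewBlock t) {M : ℕ} {π : List ℕ}
    (hπ : IsCanonicalFrom M π) : IsCanonicalFrom M (mapRunMax t M π) := by
  induction π generalizing M with
  | nil => trivial
  | cons a l ih =>
    obtain ⟨h1, h2, hl⟩ := hπ
    obtain ⟨k1, k2, k3⟩ := ht M a h1 h2
    have hmax : max M (t M a) = max M a := by omega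
    exact ⟨k1, k2, by rw [hmax]; exact ih hl⟩

theorem mapRunMax_mapRunMax (ht : PreservesNewBlock t)
    (hut : ∀ M a, 1 ≤ a → a ≤ M + 1 → u M (t M a) = a) {M : ℕ} {π : List ℕ}
    (hπ : IsCanonicalFrom M π) : mapRunMax u M (mapRunMax t M π) = π := by
  induction π generalizing M with
  | nil => rfl
  | cons a l ih =>
    obtain ⟨h1, h2, hl⟩ := hπ
    obtain ⟨k1, k2, k3⟩ := ht M a h1 h2
    have hmax : max M (t M a) = max M a := by omega
    simp only [mapRunMax, hmax, hut M a h1 h2, ih hl]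

end mapRunMax

def rotateLetter (M a : ℕ) : ℕ := if a = M + 1 then a else if a = M then 1 else a + 1

def unrotateLetter (M a : ℕ) : ℕ := if a = M + 1 then a else if a = 1 then M else a - 1

theorem preservesNewBlock_rotateLetter : PreservesNewBlock rotateLetter := by
  intro M a _ _
  unfold rotateLetter
  split_ifs <;> omega

theorem preservesNewBlock_unrotateLetter : PreservesNewBlock unrotateLetter := by
  intro M a _ _
  unfold unrotateLetter
  split_ifs <;> omega

theorem unrotateLetter_rotateLetter (M a : ℕ) (h : 1 ≤ a) :
    unrotateLetter M (rotateLetter M a) = a := by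
  unfold rotateLetter unrotateLetter
  split_ifs <;> omega

theorem rotateLetter_unrotateLetter (M a : ℕ) (h1 : 1 ≤ a) (h2 : a ≤ M + 1) :
    rotateLetter M (unrotateLetter M a) = a := by
  unfold rotateLetter unrotateLetter
  split_ifs <;> omega

def lateCount (a : ℕ) : ℕ → List ℕ → ℕ
  | _, [] => 0
  | M, c :: l => (if c = a ∧ a < M then 1 else 0) + lateCount a (max M c) l

theorem le_foldl_max (M : ℕ) (l : List ℕ) : M ≤ l.foldl max M := by
  induction l generalizing M with
  | nil => exact le_rfl
  | cons c l ih => exact (le_max_left M c).trans (ih _)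

section lateCount

variable {a M : ℕ}

theorem lateCount_le_count (l : List ℕ) : lateCount a M l ≤ l.count a := by
  induction l generalizing M with
  | nil => exact le_rfl
  | cons c l ih =>
    have := ih (M := max M c)
    simp only [lateCount, List.count_cons, beq_iff_eq]
    split_ifs <;> omega

theorem lateCount_le_of_le {M' : ℕ} (hM : M ≤ M') (l : List ℕ) :
    lateCount a M l ≤ lateCount a M' l := by
  induction l generalizing M M' with
  | nil => exact le_rfl
  | cons c l ih =>
    have := ih (max_le_max_right c hM)
    simp only [lateCount]
    split_ifs <;> omega

theorem List.Sublist.lateCount_le {l l' : List ℕ} (h : l.Sublist l') :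
    lateCount a M l ≤ lateCount a M l' := by
  induction h generalizing M with
  | slnil => exact le_rfl
  | cons c _ ih => exact ih.trans ((lateCount_le_of_le (le_max_left M c) _).trans le_add_self)
  | cons_cons c _ ih => exact Nat.add_le_add_left ih _

theorem lateCount_replicate (h : a < M) (r : ℕ) : lateCount a M (List.replicate r a) = r := by
  induction r with
  | zero => rfl
  | succ r ih => simp [lateCount, List.replicate_succ, h, max_eq_left h.le, ih, add_comm]

theorem lt_foldl_max_of_lateCount_pos {l : List ℕ} (h : 0 < lateCount a M l) :
    a < l.foldl max M := by
  induction l generalizing M with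
  | nil => simp [lateCount] at h
  | cons c l ih =>
    simp only [List.foldl_cons]
    by_cases hl : 0 < lateCount a (max M c) l
    · exact ih hl
    · have : c = a ∧ a < M := by by_contra hc; simp [lateCount, hc] at h; omega
      exact this.2.trans_le ((le_max_left M c).trans (le_foldl_max ..))

theorem IsCanonicalFrom.pos_of_lateCount_pos {l : List ℕ} (hl : IsCanonicalFrom M l)
    (h : 0 < lateCount a M l) : 0 < a :=
  hl.one_le_of_mem (List.count_pos_iff.1 (h.trans_le (lateCount_le_count l)))

theorem exists_cons_replicate_sublist_of_le_lateCount {r : ℕ} (hr : 1 ≤ r) {l : List ℕ}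
    (hM : M ≤ a) (h : r ≤ lateCount a M l) :
    ∃ y, a < y ∧ (y :: List.replicate r a).Sublist l := by
  induction l generalizing M with
  | nil => simp [lateCount] at h; omega
  | cons c l ih =>
    simp only [lateCount, show ¬(c = a ∧ a < M) by omega, if_false, zero_add] at h
    by_cases hca : c ≤ a
    · obtain ⟨y, hy, hsub⟩ := ih (max_le hM hca) h
      exact ⟨y, hy, hsub.cons c⟩
    · refine ⟨c, by omega, (List.replicate_sublist_iff.2 ?_).cons_cons c⟩
      exact h.trans (lateCount_le_count l)

theorem IsCanonicalFrom.exists_sublist_of_le_lateCount {r : ℕ} (hr : 1 ≤ r) {l : List ℕ}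
    (hl : IsCanonicalFrom M l) (hM : M < a) (h : r ≤ lateCount a M l) :
    ∃ y, a < y ∧ (a :: y :: List.replicate r a).Sublist l := by
  induction l generalizing M with
  | nil => simp [lateCount] at h; omega
  | cons c l ih =>
    obtain ⟨h1, h2, hl⟩ := hl
    simp only [lateCount, show ¬(c = a ∧ a < M) by omega, if_false, zero_add] at h
    by_cases hca : c < a
    · obtain ⟨y, hy, hsub⟩ := ih hl (max_lt hM hca) h
      exact ⟨y, hy, hsub.cons c⟩
    · obtain rfl : c = a := by omega
      obtain ⟨y, hy, hsub⟩ := exists_cons_replicate_sublist_of_le_lateCount hr le_rfl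
        (show r ≤ lateCount c c l by rwa [max_eq_right (by omega)] at h)
      exact ⟨y, hy, hsub.cons_cons c⟩

theorem count_mapRunMax_rotateLetter {b : ℕ} (hb : 2 ≤ b) {l : List ℕ}
    (hl : IsCanonicalFrom M l) :
    (mapRunMax rotateLetter M l).count b =
      (if M < b ∧ b ≤ l.foldl max M then 1 else 0) + lateCount (b - 1) M l := by
  induction l generalizing M with
  | nil =>
    rw [List.foldl_nil]
    simp only [mapRunMax, lateCount, List.count_nil]
    split_ifs <;> omega
  | cons c l ih =>
    obtain ⟨h1, h2, hl⟩ := hl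
    have := le_foldl_max (max M c) l
    rw [List.foldl_cons]
    simp only [mapRunMax, lateCount, List.count_cons, ih hl, beq_iff_eq, rotateLetter]
    split_ifs <;> omega

end lateCount

theorem IsCanonicalFrom.containsPat_one_replicate_two_iff_count {π : List ℕ}
    (hπ : IsCanonicalFrom 0 π) {m : ℕ} (hm : 1 ≤ m) :
    ContainsPat π (1 :: List.replicate m 2) ↔ ∃ b, 2 ≤ b ∧ m ≤ π.count b := by
  rw [containsPat_one_replicate_two_iff_sublist hm]
  constructor
  · rintro ⟨x, y, hxy, hsub⟩
    have hx := hπ.one_le_of_mem (hsub.subset List.mem_cons_self)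
    refine ⟨y, by omega, ?_⟩
    simpa using ((List.sublist_cons_self x _).trans hsub).count_le y
  · rintro ⟨b, hb, hcount⟩
    obtain _ | ⟨c, t⟩ := π
    · simp at hcount; omega
    obtain rfl : c = 1 := by have := hπ.1; have := hπ.2.1; omega
    refine ⟨1, b, by omega, (List.replicate_sublist_iff.2 ?_).cons_cons 1⟩
    simpa [List.count_cons, show 1 ≠ b by omega] using hcount

theorem IsCanonicalFrom.containsPat_one_two_replicate_one_iff_lateCount {π : List ℕ}
    (hπ : IsCanonicalFrom 0 π) {r : ℕ} (hr : 1 ≤ r) :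
    ContainsPat π (1 :: 2 :: List.replicate r 1) ↔ ∃ a, r ≤ lateCount a 0 π := by
  rw [containsPat_one_two_replicate_one_iff_sublist]
  constructor
  · rintro ⟨x, y, hxy, hsub⟩
    refine ⟨x, le_of_eq_of_le ?_ hsub.lateCount_le⟩
    simp [lateCount, hxy.ne', max_eq_right hxy.le, lateCount_replicate hxy]
  · rintro ⟨a, ha⟩
    exact ⟨a, hπ.exists_sublist_of_le_lateCount hr (hπ.pos_of_lateCount_pos (by omega)) ha⟩

theorem IsCanonicalFrom.containsPat_mapRunMax_rotateLetter_iff {π : List ℕ}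
    (hπ : IsCanonicalFrom 0 π) {r : ℕ} (hr : 1 ≤ r) :
    ContainsPat (mapRunMax rotateLetter 0 π) (1 :: List.replicate (r + 1) 2) ↔
      ContainsPat π (1 :: 2 :: List.replicate r 1) := by
  have hφπ := isCanonicalFrom_mapRunMax preservesNewBlock_rotateLetter hπ
  rw [hφπ.containsPat_one_replicate_two_iff_count (by omega),
    hπ.containsPat_one_two_replicate_one_iff_lateCount hr]
  constructor
  · rintro ⟨b, hb, hcount⟩
    rw [count_mapRunMax_rotateLetter hb hπ] at hcount
    exact ⟨b - 1, by split_ifs at hcount <;> omega⟩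
  · rintro ⟨a, ha⟩
    have ha0 := hπ.pos_of_lateCount_pos (by omega : 0 < lateCount a 0 π)
    have haM := lt_foldl_max_of_lateCount_pos (by omega : 0 < lateCount a 0 π)
    refine ⟨a + 1, by omega, ?_⟩
    rw [count_mapRunMax_rotateLetter (by omega) hπ, if_pos (by omega), Nat.add_sub_cancel]
    omega

theorem bijOn_mapRunMax_rotateLetter {r : ℕ} (hr : 1 ≤ r) (n : ℕ) :
    Set.BijOn (mapRunMax rotateLetter 0)
      {π | π.length = n ∧ IsCanonicalSeq π ∧ AvoidsPat π (1 :: 2 :: List.replicate r 1)}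
      {π | π.length = n ∧ IsCanonicalSeq π ∧ AvoidsPat π (1 :: List.replicate (r + 1) 2)} := by
  simp only [isCanonicalSeq_iff_isCanonicalFrom_zero]
  have hψφ {π} (hπ : IsCanonicalFrom 0 π) :
      mapRunMax unrotateLetter 0 (mapRunMax rotateLetter 0 π) = π :=
    mapRunMax_mapRunMax preservesNewBlock_rotateLetter
      (fun M a h _ => unrotateLetter_rotateLetter M a h) hπ
  have hφψ {π} (hπ : IsCanonicalFrom 0 π) :
      mapRunMax rotateLetter 0 (mapRunMax unrotateLetter 0 π) = π :=
    mapRunMax_mapRunMax preservesNewBlock_unrotateLetter rotateLetter_unrotateLetter hπ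
  refine Set.InvOn.bijOn (f' := mapRunMax unrotateLetter 0)
    ⟨fun π hπ => hψφ hπ.2.1, fun π hπ => hφψ hπ.2.1⟩ ?_ ?_
  · rintro π ⟨hn, hπ, hav⟩
    exact ⟨by simpa, isCanonicalFrom_mapRunMax preservesNewBlock_rotateLetter hπ,
      by rwa [AvoidsPat, hπ.containsPat_mapRunMax_rotateLetter_iff hr]⟩
  · rintro π ⟨hn, hπ, hav⟩
    have hψ := isCanonicalFrom_mapRunMax preservesNewBlock_unrotateLetter hπ
    refine ⟨by simpa, hψ, ?_⟩
    rwa [AvoidsPat, ← hψ.containsPat_mapRunMax_rotateLetter_iff hr, hφψ hπ]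

/-- For every m ≥ 1, the pattern 12^m is equivalent to the
pattern 121^(m−1). -/
theorem statement9 (m : ℕ) (hm : 1 ≤ m) :
    PatEquiv (1 :: List.replicate m 2) (1 :: 2 :: List.replicate (m - 1) 1) := by
  obtain ⟨r, rfl⟩ : ∃ r, m = r + 1 := ⟨m - 1, by omega⟩
  intro n
  rcases Nat.eq_zero_or_pos r with rfl | hr
  · rfl
  · exact (bijOn_mapRunMax_rotateLetter hr n).ncard_eq.symm
end

section
/- Let n ≥ m ≥ 1. A sequence π of positive integers of length n is the canonical sequence of a 1123-avoiding partition of [n] with exactly m blocks if and only if π = 12⋯(m−1)S, i.e., π is the increasing sequence (1,2,…,m−1) followed by a sequence S of length n−m+1, where S is a 123-avoiding sequence of positive integers whose maximum element equals m. -/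
lemma foldr_max_le {l : List ℕ} {B : ℕ} (h : ∀ x ∈ l, x ≤ B) : l.foldr max 0 ≤ B := by
  induction l with
  | nil => simp
  | cons a t ih => simp only [List.foldr_cons, max_le_iff]
                   exact ⟨h a (by simp), ih fun x hx => h x (by simp [hx])⟩

lemma le_foldr_max {x : ℕ} {l : List ℕ} (h : x ∈ l) : x ≤ l.foldr max 0 := by
  induction l with
  | nil => simp at h
  | cons a t ih =>
    rcases List.mem_cons.1 h with h | h
    · simp [h]
    · exact le_trans (ih h) (by simp)

lemma mem_of_foldr_max {l : List ℕ} (h : l.foldr max 0 ≠ 0) : l.foldr max 0 ∈ l := by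
  induction l with
  | nil => simp at h
  | cons a t ih =>
    simp only [List.foldr_cons]
    rcases Nat.le_total (t.foldr max 0) a with h' | h'
    · simp [max_eq_left h']
    · rw [max_eq_right h']
      right
      exact ih (by simp only [List.foldr_cons] at h; omega)

lemma foldr_max_append (l1 l2 : List ℕ) :
    (l1 ++ l2).foldr max 0 = max (l1.foldr max 0) (l2.foldr max 0) := by
  induction l1 with
  | nil => simp
  | cons a t ih => simp [ih, max_assoc]

@[simp] lemma iota_length (k : ℕ) : (iota k).length = k := by simp [iota]

lemma iota_getElem (k i : ℕ) (h : i < k) : (iota k)[i]'(by simpa using h) = i + 1 := by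
  simp [iota]

lemma foldr_max_iota (k : ℕ) : (iota k).foldr max 0 = k := by
  induction k with
  | zero => simp [iota]
  | succ n ih =>
    have : iota (n+1) = iota n ++ [n+1] := by
      simp [iota, List.range_succ]
    rw [this, foldr_max_append, ih]
    simp

lemma canon_getElem {π : List ℕ} (hc : IsCanonicalSeq π) (i : ℕ) (h : i < π.length) :
    1 ≤ π[i] ∧ π[i] ≤ (π.take i).foldr max 0 + 1 := hc i h

lemma first_exceed {π : List ℕ} (hc : IsCanonicalSeq π) {B : ℕ}
    (hex : ∃ i, ∃ h : i < π.length, B < π[i]) :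
    ∃ j, ∃ hj : j < π.length, π[j] = B + 1 ∧ ∀ k (hk : k < j), π[k]'(lt_trans hk hj) ≤ B := by
  classical
  have hex' : ∃ i, ∃ h : i < π.length, B < π[i] := hex
  obtain ⟨hj, hBj⟩ := Nat.find_spec hex'
  set j := Nat.find hex' with hjdef
  have hBj' : B < π[j]'hj := hBj
  have hmin : ∀ k, k < j → ∀ h : k < π.length, π[k] ≤ B := by
    intro k hk h
    have := Nat.find_min hex' hk
    push_neg at this
    exact this h
  refine ⟨j, hj, ?_, fun k hk => hmin k hk _⟩
  have h2 := (canon_getElem hc j hj).2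
  have hle : (π.take j).foldr max 0 ≤ B := by
    apply foldr_max_le
    intro x hx
    obtain ⟨k, hk, rfl⟩ := List.mem_iff_getElem.1 hx
    have hkj : k < j := by
      have := hk; simp [List.length_take] at this; omega
    rw [List.getElem_take]
    exact hmin k hkj _
  omega

lemma contains_1123 {π : List ℕ} {p0 p1 p2 p3 : ℕ}
    (h01 : p0 < p1) (h12 : p1 < p2) (h23 : p2 < p3) (h3 : p3 < π.length)
    (hv01 : π[p0]'(by omega) = π[p1]'(by omega))
    (hv12 : π[p1]'(by omega) < π[p2]'(by omega))
    (hv23 : π[p2]'(by omega) < π[p3]'h3) :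
    ContainsPat π [1,1,2,3] := by
  refine ⟨![⟨p0, by omega⟩, ⟨p1, by omega⟩, ⟨p2, by omega⟩, ⟨p3, h3⟩], ?_, ?_⟩
  · intro x y hxy
    fin_cases x <;> fin_cases y <;> simp_all [Fin.lt_def] <;> omega
  · intro s t
    fin_cases s <;> fin_cases t <;>
      norm_num [List.get_eq_getElem] <;> omega

lemma extract_1123 {π : List ℕ} (hcp : ContainsPat π [1,1,2,3]) :
    ∃ p0 p1 p2 p3, ∃ h01 : p0 < p1, ∃ h12 : p1 < p2, ∃ h23 : p2 < p3,
      ∃ h3 : p3 < π.length,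
      π[p0]'(by omega) = π[p1]'(by omega) ∧ π[p1]'(by omega) < π[p2]'(by omega) ∧
      π[p2]'(by omega) < π[p3]'h3 := by
  obtain ⟨f, hmono, hiso⟩ := hcp
  have m01 : f ⟨0, by norm_num⟩ < f ⟨1, by norm_num⟩ := hmono (Fin.mk_lt_mk.2 (by norm_num))
  have m12 : f ⟨1, by norm_num⟩ < f ⟨2, by norm_num⟩ := hmono (Fin.mk_lt_mk.2 (by norm_num))
  have m23 : f ⟨2, by norm_num⟩ < f ⟨3, by norm_num⟩ := hmono (Fin.mk_lt_mk.2 (by norm_num))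
  have e01 := hiso ⟨0, by norm_num⟩ ⟨1, by norm_num⟩
  have e10 := hiso ⟨1, by norm_num⟩ ⟨0, by norm_num⟩
  have e12 := hiso ⟨1, by norm_num⟩ ⟨2, by norm_num⟩
  have e23 := hiso ⟨2, by norm_num⟩ ⟨3, by norm_num⟩
  norm_num [List.get_eq_getElem] at e01 e10 e12 e23
  exact ⟨(f ⟨0, by norm_num⟩).val, (f ⟨1, by norm_num⟩).val, (f ⟨2, by norm_num⟩).val,
    (f ⟨3, by norm_num⟩).val, m01, m12, m23, (f ⟨3, by norm_num⟩).isLt,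
    le_antisymm e10 e01, e12, e23⟩

lemma contains_123 {π : List ℕ} {p0 p1 p2 : ℕ}
    (h01 : p0 < p1) (h12 : p1 < p2) (h2 : p2 < π.length)
    (hv01 : π[p0]'(by omega) < π[p1]'(by omega))
    (hv12 : π[p1]'(by omega) < π[p2]'h2) :
    ContainsPat π [1,2,3] := by
  refine ⟨![⟨p0, by omega⟩, ⟨p1, by omega⟩, ⟨p2, h2⟩], ?_, ?_⟩
  · intro x y hxy
    fin_cases x <;> fin_cases y <;> simp_all [Fin.lt_def] <;> omega
  · intro s t
    fin_cases s <;> fin_cases t <;>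
      norm_num [List.get_eq_getElem] <;> omega

lemma extract_123 {π : List ℕ} (hcp : ContainsPat π [1,2,3]) :
    ∃ p0 p1 p2, ∃ h01 : p0 < p1, ∃ h12 : p1 < p2, ∃ h2 : p2 < π.length,
      π[p0]'(by omega) < π[p1]'(by omega) ∧ π[p1]'(by omega) < π[p2]'h2 := by
  obtain ⟨f, hmono, hiso⟩ := hcp
  have m01 : f ⟨0, by norm_num⟩ < f ⟨1, by norm_num⟩ := hmono (Fin.mk_lt_mk.2 (by norm_num))
  have m12 : f ⟨1, by norm_num⟩ < f ⟨2, by norm_num⟩ := hmono (Fin.mk_lt_mk.2 (by norm_num))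
  have e01 := hiso ⟨0, by norm_num⟩ ⟨1, by norm_num⟩
  have e12 := hiso ⟨1, by norm_num⟩ ⟨2, by norm_num⟩
  norm_num [List.get_eq_getElem] at e01 e12
  exact ⟨(f ⟨0, by norm_num⟩).val, (f ⟨1, by norm_num⟩).val, (f ⟨2, by norm_num⟩).val,
    m01, m12, (f ⟨2, by norm_num⟩).isLt, e01, e12⟩

lemma prefix_eq {π : List ℕ} {m : ℕ} (hc : IsCanonicalSeq π) (hav : AvoidsPat π [1,1,2,3])
    (hmax : π.foldr max 0 = m) (hm : 1 ≤ m) (hlen : m ≤ π.length) :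
    ∀ i, i < m - 1 → ∀ h : i < π.length, π[i] = i + 1 := by
  intro i
  induction i using Nat.strong_induction_on with
  | _ i IH =>
  intro him h
  have hub : π[i] ≤ i + 1 := by
    have h2 := (canon_getElem hc i h).2
    have hle : (π.take i).foldr max 0 ≤ i := by
      apply foldr_max_le
      intro x hx
      obtain ⟨k, hk, rfl⟩ := List.mem_iff_getElem.1 hx
      have hk' : k < i := by simp [List.length_take] at hk; omega
      rw [List.getElem_take]
      have := IH k hk' (by omega) (by omega)
      omega
    omega
  have hlb := (canon_getElem hc i h).1
  by_contra hne
  have hai : π[i] ≤ i := by omega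
  have ham : π[i] - 1 < π.length := by omega
  have hprev : π[π[i]-1] = π[i] := by
    have := IH (π[i]-1) (by omega) (by omega) (by omega)
    omega
  have hmem : m ∈ π := by rw [← hmax]; exact mem_of_foldr_max (by omega)
  obtain ⟨p, hp, hpm⟩ := List.mem_iff_getElem.1 hmem
  obtain ⟨j, hj, hjval, hjmin⟩ := first_exceed hc (B := i) ⟨p, hp, by omega⟩
  have hij : i < j := by
    rcases lt_trichotomy j i with hlt | heq | hlt
    · have := IH j hlt (by omega) (by omega); omega
    · subst heq; omega
    · exact hlt
  obtain ⟨k, hk, hkval, hkmin⟩ := first_exceed hc (B := i+1) ⟨p, hp, by omega⟩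
  have hjk : j < k := by
    rcases lt_trichotomy k j with hlt | heq | hlt
    · have := hjmin k hlt; omega
    · subst heq; omega
    · exact hlt
  have h01 : π[i] - 1 < i := by omega
  have hv12 : π[i]'h < π[j]'hj := by omega
  have hv23 : π[j]'hj < π[k]'hk := by omega
  exact hav (contains_1123 h01 hij hjk hk hprev hv12 hv23)

set_option maxHeartbeats 2000000 in
/-- For n ≥ m ≥ 1 and a sequence π of positive integers of
length n: π is the canonical sequence of a 1123-avoiding partition of [n]
with exactly m blocks iff π = 12⋯(m−1)S where S is a 123-avoiding sequence
of positive integers of length n − m + 1 with maximum element m. -/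
theorem statement18 (n m : ℕ) (hm : 1 ≤ m) (hmn : m ≤ n) (π : List ℕ)
    (hlen : π.length = n) (hpos : ∀ x ∈ π, 1 ≤ x) :
    (IsCanonicalSeq π ∧ AvoidsPat π [1, 1, 2, 3] ∧ π.foldr max 0 = m) ↔
      ∃ S : List ℕ, π = iota (m - 1) ++ S ∧ S.length = n - m + 1 ∧
        (∀ x ∈ S, 1 ≤ x) ∧ AvoidsPat S [1, 2, 3] ∧ S.foldr max 0 = m := by
  constructor
  · rintro ⟨hc, hav, hmax⟩
    have hmlen : m ≤ π.length := by omega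
    have hpre := prefix_eq hc hav hmax hm hmlen
    have htake : π.take (m-1) = iota (m-1) := by
      apply List.ext_getElem
      · simp; omega
      · intro i h1 h2
        have hi : i < m - 1 := by simpa using h2
        rw [List.getElem_take, iota_getElem _ _ hi]
        exact hpre i hi (by omega)
    obtain ⟨S, hS⟩ : ∃ S, S = π.drop (m - 1) := ⟨_, rfl⟩
    have hsplit : π = iota (m-1) ++ S := by
      rw [← htake, hS, List.take_append_drop]
    have hSlen : S.length = n - m + 1 := by
      simp [hS]; omega
    have hmaxS : S.foldr max 0 = m := by
      have h1 : π.foldr max 0 = max ((iota (m-1)).foldr max 0) (S.foldr max 0) := by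
        rw [← foldr_max_append, ← hsplit]
      rw [foldr_max_iota, hmax] at h1
      omega
    refine ⟨S, hsplit, hSlen, fun x hx => hpos x (List.mem_of_mem_drop (hS ▸ hx)), ?_, hmaxS⟩
    intro hcp
    obtain ⟨q0, q1, q2, h01, h12, h2, hv01, hv12⟩ := extract_123 hcp
    have hlen2 : π.length = (m-1) + S.length := by simp [hS]; omega
    have hq2 : m - 1 + q2 < π.length := by omega
    have d0 : S[q0] = π[m-1+q0]'(by omega) := by
      simp [hS]
    have d1 : S[q1] = π[m-1+q1]'(by omega) := by
      simp [hS]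
    have d2 : S[q2]'h2 = π[m-1+q2]'hq2 := by
      simp [hS]
    have hc2m : π[m-1+q2]'hq2 ≤ m := by
      have := le_foldr_max (List.getElem_mem hq2)
      omega
    have ha1 : 1 ≤ S[q0] := hpos _ (by rw [d0]; exact List.getElem_mem _)
    have ham2 : S[q0] ≤ m - 2 := by omega
    have haQ : S[q0] - 1 < π.length := by omega
    have hprev : π[S[q0]-1] = S[q0] := by
      have := hpre (S[q0]-1) (by omega) (by omega)
      omega
    apply hav
    refine contains_1123 (p0 := S[q0]-1) (p1 := m-1+q0) (p2 := m-1+q1) (p3 := m-1+q2)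
      (by omega) (by omega) (by omega) hq2 ?_ ?_ ?_
    · omega
    · omega
    · omega
  · rintro ⟨S, rfl, hSlen, hSpos, hSav, hSmax⟩
    have hlenS : S.length = n - m + 1 := hSlen
    have hlen' : (iota (m-1) ++ S).length = (m-1) + S.length := by simp
    have hpref : ∀ i (hi : i < m - 1), (iota (m-1) ++ S)[i]'(by simp; omega) = i + 1 := by
      intro i hi
      rw [List.getElem_append_left (by simpa using hi)]
      exact iota_getElem _ _ hi
    have hsub : ∀ i (hi : m - 1 ≤ i) (h : i < (iota (m-1) ++ S).length),
        (iota (m-1) ++ S)[i] = S[i - (m-1)]'(by simp at h; omega) := by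
      intro i hi h
      rw [List.getElem_append_right (by simpa using hi)]
      simp
    have hSle : ∀ x ∈ S, x ≤ m := fun x hx => hSmax ▸ le_foldr_max hx
    refine ⟨?_, ?_, ?_⟩
    · -- canonical
      intro i h
      simp only [List.get_eq_getElem]
      constructor
      · exact hpos _ (List.getElem_mem _)
      · rcases lt_or_ge i (m-1) with hi | hi
        · have : (iota (m-1) ++ S).take i = iota i := by
            rw [List.take_append_of_le_length (by simp; omega)]
            have hmin : min i (m-1) = i := by omega
            simp only [iota, ← List.map_take, List.take_range, hmin]
          rw [this, foldr_max_iota, hpref i hi]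
        · have hvi : (iota (m-1) ++ S)[i] ≤ m := by
            rw [hsub i hi h]
            exact hSle _ (List.getElem_mem _)
          rcases Nat.lt_or_ge m 2 with hm2 | hm2
          · omega
          · have hmem : m - 1 ∈ (iota (m-1) ++ S).take i := by
              apply List.mem_iff_getElem.2
              refine ⟨m-2, by simp at h ⊢ <;> omega, ?_⟩
              rw [List.getElem_take]
              have := hpref (m-2) (by omega)
              omega
            have := le_foldr_max hmem
            omega
    · -- avoids 1123
      intro hcp
      obtain ⟨p0, p1, p2, p3, h01, h12, h23, h3, hv01, hv12, hv23⟩ := extract_1123 hcp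
      have hp1 : m - 1 ≤ p1 := by
        by_contra hcon
        push_neg at hcon
        have e0 := hpref p0 (by omega)
        have e1 := hpref p1 (by omega)
        omega
      apply hSav
      have hs3 : p3 - (m-1) < S.length := by
        simp at h3; omega
      refine contains_123 (p0 := p1 - (m-1)) (p1 := p2 - (m-1)) (p2 := p3 - (m-1))
        (by omega) (by omega) hs3 ?_ ?_
      · have e1 := hsub p1 hp1 (by omega)
        have e2 := hsub p2 (by omega) (by omega)
        omega
      · have e2 := hsub p2 (by omega) (by omega)
        have e3 := hsub p3 (by omega) h3
        omega
    · -- max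
      rw [foldr_max_append, foldr_max_iota, hSmax]
      omega
end
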